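/- arXiv:0912.3148 — 6 statements merged into one kernel-verified Lean document; each statement's English description precedes it below -/
import Mathlib

section
/- Let α = (α_0, ..., α_ℓ) be a filter of order p ≥ 2 and let H ∈ (0,1). Then the series ∑_{k=1}^{∞} (∑_{q,r=0}^{ℓ} α_q α_r |k+q-r|^{2H})^2 converges. -/
/-!
Put the weights `α_q α_r` at the points `q - r`. Since `α` annihilates polynomials of degree `< p`,
the binomial theorem shows that these weights annihilate polynomials of degree `< 2p`, at every
translate of the points. So when `t ↦ t ^ (2H)` is expanded by Taylor's formula of order `2p` at
a point a bounded distance to the left of `K`, the polynomial part is annihilated, and the remainder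
is `O(K ^ (2H - 2p))` because the `2p`-th derivative of `t ^ (2H)` is `O(t ^ (2H - 2p))`. The squares
are then `O(k ^ (4H - 4p))`, and `4H - 4p < -1`.
-/

open Finset Set Asymptotics Filter
open scoped Nat

def HasVanishingMoments {ι : Type*} (s : Finset ι) (w x : ι → ℝ) (n : ℕ) : Prop :=
  ∀ j < n, ∑ i ∈ s, w i * x i ^ j = 0

namespace HasVanishingMoments

variable {ι κ : Type*} {s : Finset ι} {w x : ι → ℝ} {n : ℕ}

theorem neg (h : HasVanishingMoments s w x n) : HasVanishingMoments s w (fun i => -x i) n := by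
  intro j hj
  calc ∑ i ∈ s, w i * (-x i) ^ j = (-1) ^ j * ∑ i ∈ s, w i * x i ^ j := by
        rw [mul_sum]; exact sum_congr rfl fun i _ => by ring
    _ = 0 := by rw [h j hj, mul_zero]

theorem add_const (h : HasVanishingMoments s w x n) (c : ℝ) :
    HasVanishingMoments s w (fun i => x i + c) n := by
  intro j hj
  calc ∑ i ∈ s, w i * (x i + c) ^ j
      = ∑ a ∈ range (j + 1), (c ^ (j - a) * j.choose a) * ∑ i ∈ s, w i * x i ^ a := by
        simp_rw [add_pow, mul_sum]
        rw [sum_comm]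
        exact sum_congr rfl fun a _ => sum_congr rfl fun i _ => by ring
    _ = 0 := sum_eq_zero fun a ha => by rw [h a (by grind), mul_zero]

theorem prod {t : Finset κ} {v y : κ → ℝ} {m : ℕ} (hw : HasVanishingMoments s w x n)
    (hv : HasVanishingMoments t v y m) :
    HasVanishingMoments (s ×ˢ t) (fun i => w i.1 * v i.2) (fun i => x i.1 + y i.2) (n + m) := by
  intro j hj
  calc ∑ i ∈ s ×ˢ t, w i.1 * v i.2 * (x i.1 + y i.2) ^ j
      = ∑ a ∈ range (j + 1), (j.choose a : ℝ) *
          ((∑ i ∈ s, w i * x i ^ a) * ∑ k ∈ t, v k * y k ^ (j - a)) := by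
        simp_rw [sum_mul_sum, mul_sum, sum_product, add_pow, mul_sum]
        refine (sum_congr rfl fun i _ => sum_comm).trans (sum_comm.trans ?_)
        exact sum_congr rfl fun a _ => sum_congr rfl fun i _ => sum_congr rfl fun k _ => by ring
    _ = 0 := sum_eq_zero fun a ha => by
        rcases lt_or_ge a n with han | han
        · rw [hw a han, zero_mul, mul_zero]
        · rw [hv (j - a) (by grind), mul_zero, mul_zero]

theorem sum_mul_taylorWithinEval_eq_zero {a : ℝ}
    (h : HasVanishingMoments s w (fun i => x i - a) (n + 1)) (f : ℝ → ℝ) (t : Set ℝ) :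
    ∑ i ∈ s, w i * taylorWithinEval f n t a (x i) = 0 := by
  simp_rw [taylor_within_apply, mul_sum]
  rw [sum_comm]
  refine sum_eq_zero fun j hj => ?_
  calc ∑ i ∈ s, w i * (((j ! : ℝ)⁻¹ * (x i - a) ^ j) • iteratedDerivWithin j f t a)
      = ((j ! : ℝ)⁻¹ * iteratedDerivWithin j f t a) * ∑ i ∈ s, w i * (x i - a) ^ j := by
        rw [mul_sum]; exact sum_congr rfl fun i _ => by rw [smul_eq_mul]; ring
    _ = 0 := by rw [h j (List.mem_range.mp hj), mul_zero]

theorem abs_sum_mul_le {f : ℝ → ℝ} {a b M : ℝ} (hab : a ≤ b)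
    (hf : ContDiffOn ℝ (n + 1) f (Icc a b))
    (hM : ∀ y ∈ Icc a b, ‖iteratedDerivWithin (n + 1) f (Icc a b) y‖ ≤ M)
    (hx : ∀ i ∈ s, x i ∈ Icc a b) (hw : HasVanishingMoments s w (fun i => x i - a) (n + 1)) :
    |∑ i ∈ s, w i * f (x i)| ≤ (∑ i ∈ s, |w i|) * (M * (b - a) ^ (n + 1) / n !) := by
  have hremainder : ∀ i ∈ s, |f (x i) - taylorWithinEval f n (Icc a b) a (x i)| ≤
      M * (b - a) ^ (n + 1) / n ! := fun i hi => by
    have hM0 : 0 ≤ M := (norm_nonneg _).trans (hM a (left_mem_Icc.mpr hab))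
    refine (taylor_mean_remainder_bound hab hf (hx i hi) hM).trans ?_
    gcongr
    · exact sub_nonneg.mpr (hx i hi).1
    · exact (hx i hi).2
  calc |∑ i ∈ s, w i * f (x i)|
      = |∑ i ∈ s, w i * (f (x i) - taylorWithinEval f n (Icc a b) a (x i))| := by
        simp_rw [mul_sub, sum_sub_distrib, hw.sum_mul_taylorWithinEval_eq_zero, sub_zero]
    _ ≤ ∑ i ∈ s, |w i| * (M * (b - a) ^ (n + 1) / n !) := by
        refine (abs_sum_le_sum_abs _ _).trans (sum_le_sum fun i hi => ?_)
        rw [abs_mul]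
        exact mul_le_mul_of_nonneg_left (hremainder i hi) (abs_nonneg _)
    _ = _ := by rw [sum_mul]

end HasVanishingMoments

theorem norm_iteratedDerivWithin_rpow_le {a b r y : ℝ} {n : ℕ} (ha : 0 < a) (hab : a < b)
    (hr : r ≤ n) (hy : y ∈ Icc a b) :
    ‖iteratedDerivWithin n (fun t : ℝ => t ^ r) (Icc a b) y‖ ≤
      |(descPochhammer ℝ n).eval r| * a ^ (r - n) := by
  have hy0 : 0 < y := ha.trans_le hy.1
  rw [iteratedDerivWithin_eq_iteratedDeriv (uniqueDiffOn_Icc hab)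
    (Real.contDiffAt_rpow_const_of_ne hy0.ne') hy, iteratedDeriv_eq_iterate,
    Real.iter_deriv_rpow_const, norm_mul, Real.norm_eq_abs, Real.norm_eq_abs,
    abs_of_pos (Real.rpow_pos_of_pos hy0 _)]
  exact mul_le_mul_of_nonneg_left (Real.rpow_le_rpow_of_nonpos ha hy.1 (sub_nonpos.mpr hr))
    (abs_nonneg _)

theorem HasVanishingMoments.isBigO_sum_mul_abs_add_rpow {ι : Type*} {s : Finset ι}
    {w x : ι → ℝ} {n : ℕ} (hw : HasVanishingMoments s w x (n + 1)) {r : ℝ} (hr : r ≤ n + 1) :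
    (fun K : ℝ => ∑ i ∈ s, w i * |K + x i| ^ r) =O[atTop] fun K => K ^ (r - (n + 1)) := by
  set R := 1 + ∑ i ∈ s, |x i|
  have hxR : ∀ i ∈ s, |x i| < R := fun i hi => by
    have := single_le_sum (f := fun i => |x i|) (fun i _ => abs_nonneg _) hi
    linarith
  have hR : 1 ≤ R := le_add_of_nonneg_right (sum_nonneg fun i _ => abs_nonneg _)
  set e := r - (n + 1)
  set P := |(descPochhammer ℝ (n + 1)).eval r|
  refine IsBigO.of_bound ((∑ i ∈ s, |w i|) * (P * 2 ^ (-e) * (2 * R) ^ (n + 1) / n !))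
    (eventually_atTop.2 ⟨2 * R, fun K hK => ?_⟩)
  have hK : 0 < K := by linarith
  have ha : 0 < K - R := by linarith
  have hx : ∀ i ∈ s, K + x i ∈ Icc (K - R) (K + R) := fun i hi => by
    have := abs_lt.mp (hxR i hi)
    constructor <;> linarith
  have hmom : HasVanishingMoments s w (fun i => K + x i - (K - R)) (n + 1) := by
    convert hw.add_const R using 3 with i
    ring
  have hf : ContDiffOn ℝ (n + 1) (fun t : ℝ => t ^ r) (Icc (K - R) (K + R)) := fun t ht =>
    (Real.contDiffAt_rpow_const_of_ne (ha.trans_le ht.1).ne').contDiffWithinAt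
  have hM : ∀ y ∈ Icc (K - R) (K + R),
      ‖iteratedDerivWithin (n + 1) (fun t : ℝ => t ^ r) (Icc (K - R) (K + R)) y‖ ≤
        P * (K - R) ^ e := fun y hy => by
    have := norm_iteratedDerivWithin_rpow_le (n := n + 1) ha (by linarith)
      (by push_cast; exact hr) hy
    push_cast at this
    exact this
  have hKR : (K - R) ^ e ≤ 2 ^ (-e) * K ^ e := by
    calc (K - R) ^ e ≤ (K / 2) ^ e :=
          Real.rpow_le_rpow_of_nonpos (by positivity) (by linarith) (by linarith)
      _ = 2 ^ (-e) * K ^ e := by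
          rw [Real.div_rpow hK.le zero_le_two, Real.rpow_neg zero_le_two]; ring
  have hsum : ∑ i ∈ s, w i * |K + x i| ^ r = ∑ i ∈ s, w i * (K + x i) ^ r :=
    sum_congr rfl fun i hi => by rw [abs_of_pos (ha.trans_le (hx i hi).1)]
  rw [Real.norm_eq_abs, Real.norm_eq_abs, abs_of_pos (Real.rpow_pos_of_pos hK e), hsum]
  refine (hmom.abs_sum_mul_le (by linarith) hf hM hx).trans ?_
  rw [show K + R - (K - R) = 2 * R by ring, mul_assoc _ _ (K ^ e)]
  gcongr
  calc P * (K - R) ^ e * (2 * R) ^ (n + 1) / n !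
      ≤ P * (2 ^ (-e) * K ^ e) * (2 * R) ^ (n + 1) / n ! := by gcongr
    _ = P * 2 ^ (-e) * (2 * R) ^ (n + 1) / n ! * K ^ e := by ring

theorem filter_series_summable_general (ℓ p : ℕ) (hp : 2 ≤ p) (α : ℕ → ℝ)
    (hzero : ∀ r < p, ∑ q ∈ Finset.range (ℓ + 1), α q * (q : ℝ) ^ r = 0)
    (H : ℝ) (hH : H ∈ Set.Ioo (0 : ℝ) 1) :
    Summable (fun k : ℕ =>
      (∑ q ∈ Finset.range (ℓ + 1), ∑ r ∈ Finset.range (ℓ + 1),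
        α q * α r * |((k : ℝ) + 1) + (q : ℝ) - (r : ℝ)| ^ (2 * H)) ^ 2) := by
  obtain ⟨n, hn⟩ : ∃ n, p + p = n + 1 := ⟨p + p - 1, by omega⟩
  have hn' : (n : ℝ) + 1 = 2 * p := by rw [two_mul]; exact_mod_cast hn.symm
  have hp' : (2 : ℝ) ≤ p := by exact_mod_cast hp
  have hfilter : HasVanishingMoments (Finset.range (ℓ + 1)) α (fun q => (q : ℝ)) p := hzero
  have hmom : HasVanishingMoments (Finset.range (ℓ + 1) ×ˢ Finset.range (ℓ + 1))
      (fun i => α i.1 * α i.2) (fun i => (i.1 : ℝ) + -(i.2 : ℝ) + 1) (n + 1) :=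
    hn ▸ (hfilter.prod hfilter.neg).add_const 1
  have hO := (hmom.isBigO_sum_mul_abs_add_rpow (r := 2 * H) (by linarith [hH.2])).comp_tendsto
    tendsto_natCast_atTop_atTop
  have hsum : Summable fun k : ℕ => ((k : ℝ) ^ (2 * H - (n + 1))) ^ 2 :=
    (Real.summable_nat_rpow.mpr (by linarith [hH.2] : 2 * (2 * H - (n + 1)) < -1)).congr
      fun k => by rw [← Real.rpow_natCast, ← Real.rpow_mul k.cast_nonneg, mul_comm]; norm_num
  refine summable_of_isBigO_nat' hsum ((hO.pow 2).congr_left fun k => ?_)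
  rw [Function.comp_apply, Finset.sum_product]
  ring_nf

/-- For a filter `α` of order `p ≥ 2` and `H ∈ (0,1)`, the series
`∑_{k=1}^∞ (∑_{q,r} α_q α_r |k+q-r|^{2H})²` converges. -/
theorem filter_series_summable (ℓ p : ℕ) (hp : 2 ≤ p) (α : ℕ → ℝ)
    (hzero : ∀ r < p, ∑ q ∈ Finset.range (ℓ + 1), α q * (q : ℝ) ^ r = 0)
    (hne : ∑ q ∈ Finset.range (ℓ + 1), α q * (q : ℝ) ^ p ≠ 0)
    (H : ℝ) (hH : H ∈ Set.Ioo (0 : ℝ) 1) :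
    Summable (fun k : ℕ =>
      (∑ q ∈ Finset.range (ℓ + 1), ∑ r ∈ Finset.range (ℓ + 1),
        α q * α r * |((k : ℝ) + 1) + (q : ℝ) - (r : ℝ)| ^ (2 * H)) ^ 2) :=
  filter_series_summable_general ℓ p hp α hzero H hH
end

section
/- Let α = (α_0, ..., α_ℓ) be a filter of order p ≥ 2 and let H ∈ (0,1). Then the series ∑_{k=1}^{∞} k (∑_{q,r=0}^{ℓ} α_q α_r |k+q-r|^{2H})^2 converges. -/
open Finset

/-!
Write `h(t) = ∑_q α_q (t + q)^{2H}`, so that the inner double sum at `t = k + 1` is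
`∑_r α_r h(t - r)`. A filter of order `p ≥ 2` annihilates constants and linear functions, so
subtracting first-order Taylor polynomials shows `h'(t) = 2H ∑_q α_q (t + q)^{2H-1} = O(t^{2H-3})`,
and then, since `∑_r α_r = 0`, the double sum is `O(k^{2H-3})`. The general term is therefore
`O(k^{4H-5})`, which is summable because `H < 1`.
-/

lemma abs_image_sub_le_of_abs_deriv_le {f f' : ℝ → ℝ} {a b M : ℝ}
    (hf : ∀ y ∈ Set.Icc a b, HasDerivAt f (f' y) y) (hM : ∀ y ∈ Set.Icc a b, |f' y| ≤ M)
    {y : ℝ} (hy : y ∈ Set.Icc a b) : |f y - f a| ≤ M * (b - a) := by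
  have hM0 : 0 ≤ M := (abs_nonneg _).trans (hM a ⟨le_rfl, hy.1.trans hy.2⟩)
  calc |f y - f a| ≤ M * (y - a) :=
        norm_image_sub_le_of_norm_deriv_le_segment' (fun z hz => (hf z hz).hasDerivWithinAt)
          (fun z hz => hM z (Set.Ico_subset_Icc_self hz)) y hy
    _ ≤ M * (b - a) := by gcongr; exact hy.2

section VanishingMoments

variable {ι : Type*} (s : Finset ι) (α x : ι → ℝ) {f f' f'' : ℝ → ℝ} {a b M : ℝ}

lemma abs_sum_mul_le_of_sum_eq_zero (hα : ∑ i ∈ s, α i = 0) (hx : ∀ i ∈ s, x i ∈ Set.Icc a b)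
    (hf : ∀ y ∈ Set.Icc a b, HasDerivAt f (f' y) y) (hM : ∀ y ∈ Set.Icc a b, |f' y| ≤ M) :
    |∑ i ∈ s, α i * f (x i)| ≤ (∑ i ∈ s, |α i|) * (M * (b - a)) := by
  have hshift : ∑ i ∈ s, α i * f (x i) = ∑ i ∈ s, α i * (f (x i) - f a) := by
    simp only [mul_sub, sum_sub_distrib, ← sum_mul, hα, zero_mul, sub_zero]
  rw [hshift, sum_mul]
  refine (abs_sum_le_sum_abs _ _).trans (sum_le_sum fun i hi => ?_)
  rw [abs_mul]
  exact mul_le_mul_of_nonneg_left (abs_image_sub_le_of_abs_deriv_le hf hM (hx i hi))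
    (abs_nonneg _)

lemma abs_sum_mul_le_of_sum_eq_zero_of_sum_mul_eq_zero (hα : ∑ i ∈ s, α i = 0)
    (hαx : ∑ i ∈ s, α i * x i = 0) (hx : ∀ i ∈ s, x i ∈ Set.Icc a b)
    (hf : ∀ y ∈ Set.Icc a b, HasDerivAt f (f' y) y)
    (hf' : ∀ y ∈ Set.Icc a b, HasDerivAt f' (f'' y) y) (hM : ∀ y ∈ Set.Icc a b, |f'' y| ≤ M) :
    |∑ i ∈ s, α i * f (x i)| ≤ (∑ i ∈ s, |α i|) * (M * (b - a) * (b - a)) := by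
  -- `α` annihilates the tangent line of `f` at `a`, so only `f` minus that line matters.
  have hcancel : ∑ i ∈ s, α i * f (x i) = ∑ i ∈ s, α i * (f (x i) - f' a * x i) := by
    simp only [mul_sub, sum_sub_distrib, mul_left_comm _ (f' a), ← mul_sum, hαx, mul_zero,
      sub_zero]
  rw [hcancel]
  refine abs_sum_mul_le_of_sum_eq_zero s α x hα hx (f := fun y => f y - f' a * y)
    (f' := fun y => f' y - f' a)
    (fun y hy => ?_) (fun y hy => abs_image_sub_le_of_abs_deriv_le hf' hM hy)
  exact (hf y hy).fun_sub (by simpa using (hasDerivAt_id y).const_mul (f' a))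

end VanishingMoments

section PowerFilter

variable (ℓ : ℕ) (α : ℕ → ℝ) (h0 : ∑ q ∈ range (ℓ + 1), α q = 0)
  (h1 : ∑ q ∈ range (ℓ + 1), α q * q = 0)
include h0 h1

lemma abs_sum_mul_add_rpow_le {s t : ℝ} (hs : s ≤ 2) (ht : 0 < t) :
    |∑ q ∈ range (ℓ + 1), α q * (t + q) ^ s| ≤
      (∑ q ∈ range (ℓ + 1), |α q|) * (|s * (s - 1)| * t ^ (s - 2) * ℓ * ℓ) := by
  have hpos : ∀ y ∈ Set.Icc t (t + ℓ), 0 < y := fun y hy => ht.trans_le hy.1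
  have hmoment : ∑ q ∈ range (ℓ + 1), α q * (t + q) = 0 := by
    simp only [mul_add, sum_add_distrib, ← sum_mul, h0, h1, zero_mul, add_zero]
  have key := abs_sum_mul_le_of_sum_eq_zero_of_sum_mul_eq_zero (range (ℓ + 1)) α
    (fun q => t + q) (f := fun y => y ^ s) (f' := fun y => s * y ^ (s - 1))
    (f'' := fun y => s * (s - 1) * y ^ (s - 2)) (a := t) (b := t + ℓ)
    (M := |s * (s - 1)| * t ^ (s - 2)) h0 hmoment
    (fun q hq => ⟨by simp, by simpa using Nat.le_of_lt_succ (mem_range.1 hq)⟩)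
    (fun y hy => Real.hasDerivAt_rpow_const (Or.inl (hpos y hy).ne'))
    (fun y hy => by
      have := (Real.hasDerivAt_rpow_const (p := s - 1) (Or.inl (hpos y hy).ne')).const_mul s
      rwa [sub_sub, one_add_one_eq_two, ← mul_assoc] at this)
    (fun y hy => by
      rw [abs_mul, abs_of_pos (Real.rpow_pos_of_pos (hpos y hy) _)]
      exact mul_le_mul_of_nonneg_left (Real.rpow_le_rpow_of_nonpos ht hy.1 (by linarith))
        (abs_nonneg _))
  simpa [mul_assoc] using key

lemma abs_sum_sum_mul_abs_add_sub_rpow_le {s t : ℝ} (hs : s ≤ 3) (ht : (ℓ : ℝ) < t) :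
    |∑ q ∈ range (ℓ + 1), ∑ r ∈ range (ℓ + 1), α q * α r * |t + q - r| ^ s| ≤
      (∑ q ∈ range (ℓ + 1), |α q|) ^ 2 * |s * (s - 1) * (s - 2)| * ℓ ^ 3 * (t - ℓ) ^ (s - 3) := by
  set h : ℝ → ℝ := fun y => ∑ q ∈ range (ℓ + 1), α q * (y + q) ^ s
  have hsplit : ∑ q ∈ range (ℓ + 1), ∑ r ∈ range (ℓ + 1), α q * α r * |t + q - r| ^ s =
      ∑ r ∈ range (ℓ + 1), α r * h (t - r) := by
    rw [sum_comm]
    refine sum_congr rfl fun r hr => ?_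
    have hr : (r : ℝ) ≤ ℓ := by exact_mod_cast Nat.le_of_lt_succ (mem_range.1 hr)
    rw [mul_sum]
    refine sum_congr rfl fun q _ => ?_
    have hq : (0 : ℝ) ≤ q := q.cast_nonneg
    rw [abs_of_pos (by linarith), sub_add_eq_add_sub]
    ring
  have hpos : ∀ y ∈ Set.Icc (t - ℓ) t, 0 < y := fun y hy => (sub_pos.2 ht).trans_le hy.1
  have hderiv : ∀ y ∈ Set.Icc (t - ℓ) t,
      HasDerivAt h (s * ∑ q ∈ range (ℓ + 1), α q * (y + q) ^ (s - 1)) y := by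
    intro y hy
    have hy0 := hpos y hy
    rw [mul_sum]
    refine HasDerivAt.fun_sum fun q _ => ?_
    have := ((Real.hasDerivAt_rpow_const (p := s) (Or.inl (by positivity : y + q ≠ 0))).comp y
      ((hasDerivAt_id y).add_const (q : ℝ))).const_mul (α q)
    simpa [mul_left_comm] using this
  have hbound : ∀ y ∈ Set.Icc (t - ℓ) t,
      |s * ∑ q ∈ range (ℓ + 1), α q * (y + q) ^ (s - 1)| ≤
        |s| * ((∑ q ∈ range (ℓ + 1), |α q|) *
          (|(s - 1) * (s - 2)| * (t - ℓ) ^ (s - 3) * ℓ * ℓ)) := by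
    intro y hy
    have key := abs_sum_mul_add_rpow_le ℓ α h0 h1 (s := s - 1) (by linarith) (hpos y hy)
    rw [show s - 1 - 1 = s - 2 by ring, show s - 1 - 2 = s - 3 by ring] at key
    have hmono : y ^ (s - 3) ≤ (t - ℓ) ^ (s - 3) :=
      Real.rpow_le_rpow_of_nonpos (sub_pos.2 ht) hy.1 (by linarith)
    rw [abs_mul]
    gcongr
    exact key.trans (by gcongr)
  have hpoints : ∀ r ∈ range (ℓ + 1), t - r ∈ Set.Icc (t - ℓ) t := fun r hr =>
    ⟨by gcongr; exact_mod_cast Nat.le_of_lt_succ (mem_range.1 hr), by simp⟩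
  rw [hsplit]
  refine (abs_sum_mul_le_of_sum_eq_zero _ α _ h0 hpoints hderiv hbound).trans_eq ?_
  simp only [abs_mul]
  ring

end PowerFilter

lemma summable_mul_sq_of_abs_le_rpow (ℓ : ℕ) {u : ℕ → ℝ} {K e : ℝ} (he : 2 * e + 1 < -1)
    (hu : ∀ k : ℕ, |u k| ≤ K * ((k : ℝ) + 1) ^ e) :
    Summable fun k : ℕ => (((k + ℓ : ℕ) : ℝ) + 1) * u k ^ 2 := by
  have hdominant : Summable fun k : ℕ => ((k : ℝ) + 1) ^ (2 * e + 1) := by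
    simpa using (summable_nat_add_iff 1).2 (Real.summable_nat_rpow.2 he)
  refine Summable.of_nonneg_of_le (fun k => by positivity) (fun k => ?_)
    (hdominant.mul_left (((ℓ : ℝ) + 1) * K ^ 2))
  have hk : (0 : ℝ) < k + 1 := by positivity
  have hu2 : u k ^ 2 ≤ K ^ 2 * ((k : ℝ) + 1) ^ (2 * e) := by
    calc u k ^ 2 = |u k| ^ 2 := (sq_abs _).symm
      _ ≤ (K * ((k : ℝ) + 1) ^ e) ^ 2 := by gcongr; exact hu k
      _ = K ^ 2 * ((k : ℝ) + 1) ^ (2 * e) := by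
        rw [mul_pow, ← Real.rpow_mul_natCast hk.le, mul_comm e]
        norm_cast
  calc (((k + ℓ : ℕ) : ℝ) + 1) * u k ^ 2
      ≤ (((ℓ : ℝ) + 1) * ((k : ℝ) + 1)) * (K ^ 2 * ((k : ℝ) + 1) ^ (2 * e)) := by
        gcongr
        push_cast
        nlinarith [k.cast_nonneg (α := ℝ), ℓ.cast_nonneg (α := ℝ)]
    _ = ((ℓ : ℝ) + 1) * K ^ 2 * ((k : ℝ) + 1) ^ (2 * e + 1) := by
        rw [Real.rpow_add_one hk.ne']
        ring

theorem filter_series_summable_weighted_general (ℓ p : ℕ) (hp : 2 ≤ p) (α : ℕ → ℝ)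
    (hzero : ∀ r < p, ∑ q ∈ Finset.range (ℓ + 1), α q * (q : ℝ) ^ r = 0)
    (H : ℝ) (hH : H ∈ Set.Ioo (0 : ℝ) 1) :
    Summable (fun k : ℕ =>
      ((k : ℝ) + 1) *
      (∑ q ∈ Finset.range (ℓ + 1), ∑ r ∈ Finset.range (ℓ + 1),
        α q * α r * |((k : ℝ) + 1) + (q : ℝ) - (r : ℝ)| ^ (2 * H)) ^ 2) := by
  have h0 : ∑ q ∈ range (ℓ + 1), α q = 0 := by simpa using hzero 0 (by omega)
  have h1 : ∑ q ∈ range (ℓ + 1), α q * q = 0 := by simpa using hzero 1 (by omega)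
  rw [← summable_nat_add_iff ℓ]
  apply summable_mul_sq_of_abs_le_rpow ℓ (e := 2 * H - 3) (by linarith [hH.2])
  intro k
  have := abs_sum_sum_mul_abs_add_sub_rpow_le ℓ α h0 h1 (s := 2 * H)
    (t := ((k + ℓ : ℕ) : ℝ) + 1) (by linarith [hH.2]) (by push_cast; linarith)
  rwa [show ((k + ℓ : ℕ) : ℝ) + 1 - ℓ = k + 1 by push_cast; ring] at this

/-- For a filter `α` of order `p ≥ 2` and `H ∈ (0,1)`, the series
`∑_{k=1}^∞ k (∑_{q,r} α_q α_r |k+q-r|^{2H})²` converges. -/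
theorem filter_series_summable_weighted (ℓ p : ℕ) (hp : 2 ≤ p) (α : ℕ → ℝ)
    (hzero : ∀ r < p, ∑ q ∈ Finset.range (ℓ + 1), α q * (q : ℝ) ^ r = 0)
    (hne : ∑ q ∈ Finset.range (ℓ + 1), α q * (q : ℝ) ^ p ≠ 0)
    (H : ℝ) (hH : H ∈ Set.Ioo (0 : ℝ) 1) :
    Summable (fun k : ℕ =>
      ((k : ℝ) + 1) *
      (∑ q ∈ Finset.range (ℓ + 1), ∑ r ∈ Finset.range (ℓ + 1),
        α q * α r * |((k : ℝ) + 1) + (q : ℝ) - (r : ℝ)| ^ (2 * H)) ^ 2) :=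
  filter_series_summable_weighted_general ℓ p hp α hzero H hH
end

section
/- Let H ∈ (1/2, 1) and for x ∈ [1/2, 1] let c(x) = -∑_{q,r=0}^{ℓ} α_q α_r |q-r|^{2x}, where α is a filter of order p ≥ 2. Define F_N(x) = (c(x)/2) N^{-2x} - S for a fixed real S. If N > exp( max_{x ∈ [1/2,1]} [ (∑_{q,r} α_q α_r log|q-r| · |q-r|^{2x}) / (∑_{q,r} α_q α_r |q-r|^{2x}) ] ) (with the convention 0·log 0 = 0), then F_N is strictly decreasing on [1/2,1]; hence the equation F_N(x) = 0 has at most one solution in [1/2,1]. -/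
/-!
For a filter of order `p ≥ 2` we have `∑ α_q = ∑ α_q q = 0`. Write `B x = ∑ α_q α_r |q - r|^(2x)`
(so `c = -B`) and `A x = ∑ α_q α_r log|q - r| |q - r|^(2x)`; then `B' = 2A` and
`F_N' x = N^(-2x) (B x log N - A x)`.

The Bernstein representation `|t|^(2x) K(x) = ∫₀^∞ (1 - e^(-t²u)) u^(-1-x) du` together with
`∑ α_q = 0` gives `B x K(x) = -∫₀^∞ G(u) u^(-1-x) du` with `G u = ∑ α_q α_r e^(-(q-r)² u)`.
The Gaussian kernel is positive definite, so `G ≥ 0`, and `G u → ∑ α_q² > 0` as `u → ∞`; with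
`K(x) ≤ 1/(x(1-x))` this yields `B x ≤ -ε x (1 - x)` on `(0, 1)`. As `B 1 = 0`, this forces
`A 1 = B'(1)/2 > 0`, so `A/B ≤ 0` near `1` (at `x = 1` the quotient is the junk value `A 1 / 0 = 0`)
and `A/B` is bounded above on `[1/2, 1]`. Hence `log N` exceeds `A/B` there, i.e. `F_N' < 0`.
-/

open Finset Real Set Filter Topology MeasureTheory

theorem hasDerivAt_rpow_two_mul {b x : ℝ} (hb : 0 ≤ b) (hx : 0 < x) :
    HasDerivAt (fun y => b ^ (2 * y)) (2 * log b * b ^ (2 * x)) x := by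
  rcases hb.eq_or_lt with rfl | hb
  · have hzero : (fun y : ℝ => (0 : ℝ) ^ (2 * y)) =ᶠ[𝓝 x] fun _ => 0 := by
      filter_upwards [eventually_gt_nhds hx] with y hy
      exact zero_rpow (by positivity)
    simpa using (hasDerivAt_const x (0 : ℝ)).congr_of_eventuallyEq hzero
  · convert ((hasDerivAt_id' x).const_mul 2).const_rpow hb using 1
    ring

theorem HasDerivAt.le_of_forall_Ioo_le {f : ℝ → ℝ} {f' b c δ : ℝ} (hf : HasDerivAt f f' b)
    (hcb : c < b) (h : ∀ y ∈ Ioo c b, f y ≤ f b - δ * (b - y)) : δ ≤ f' := by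
  have hslope : Tendsto (slope f b) (𝓝[<] b) (𝓝 f') :=
    (hasDerivAt_iff_tendsto_slope.1 hf).mono_left (nhdsWithin_mono _ fun y hy => ne_of_lt hy)
  refine ge_of_tendsto hslope ?_
  filter_upwards [Ioo_mem_nhdsLT hcb] with y hy
  rw [slope_def_field, le_div_iff_of_neg (sub_neg.2 hy.2)]
  linarith [h y hy]

theorem bddAbove_image_div_Icc {A B : ℝ → ℝ} {a b : ℝ} (hab : a ≤ b) (hA : ContinuousOn A (Icc a b))
    (hB : ContinuousOn B (Icc a b)) (hBneg : ∀ x ∈ Ico a b, B x < 0) (hBb : B b ≤ 0)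
    (hAb : 0 < A b) : BddAbove ((fun x => A x / B x) '' Icc a b) := by
  obtain ⟨ε, hε, hball⟩ := Metric.mem_nhdsWithin_iff.1
    ((hA b ⟨hab, le_rfl⟩).eventually (lt_mem_nhds hAb))
  have hcont : ContinuousOn (fun x => A x / B x) (Icc a (b - ε / 2)) :=
    (hA.mono (Icc_subset_Icc_right (by linarith))).div
      (hB.mono (Icc_subset_Icc_right (by linarith)))
      fun x hx => (hBneg x ⟨hx.1, by linarith [hx.2]⟩).ne
  obtain ⟨M, hM⟩ := isCompact_Icc.bddAbove_image hcont
  refine ⟨max M 0, ?_⟩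
  rintro _ ⟨x, hx, rfl⟩
  rcases le_or_gt x (b - ε / 2) with hxm | hxm
  · exact (hM ⟨x, ⟨hx.1, hxm⟩, rfl⟩).trans (le_max_left _ _)
  · have hAx : 0 < A x := hball ⟨by rw [Metric.mem_ball, dist_comm, Real.dist_eq,
      abs_of_nonneg (by linarith [hx.2])]; linarith, hx⟩
    have hBx : B x ≤ 0 := hx.2.eq_or_lt.elim (fun h => h ▸ hBb) fun h => (hBneg x ⟨hx.1, h⟩).le
    exact (div_nonpos_of_nonneg_of_nonpos hAx.le hBx).trans (le_max_right _ _)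

theorem mul_log_lt_of_exp_sSup_lt {A B : ℝ → ℝ} {D : Set ℝ} {N : ℝ}
    (hbdd : BddAbove ((fun x => A x / B x) '' D))
    (hN : exp (sSup ((fun x => A x / B x) '' D)) < N) {x : ℝ} (hx : x ∈ D) (hBx : B x < 0) :
    B x * log N < A x := by
  have hsup : sSup ((fun x => A x / B x) '' D) < log N :=
    (lt_log_iff_exp_lt ((exp_pos _).trans hN)).2 hN
  have := (div_lt_iff_of_neg hBx).1 ((le_csSup hbdd (mem_image_of_mem _ hx)).trans_lt hsup)
  linarith

theorem strictAntiOn_neg_div_two_mul_rpow_sub {A B : ℝ → ℝ} {a b N : ℝ} (S : ℝ) (hN : 0 < N)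
    (hB : ∀ x ∈ Icc a b, HasDerivAt B (2 * A x) x) (hlt : ∀ x ∈ Ioo a b, B x * log N < A x) :
    StrictAntiOn (fun x => -B x / 2 * N ^ (-(2 * x)) - S) (Icc a b) := by
  have hF : ∀ x ∈ Icc a b, HasDerivAt (fun x => -B x / 2 * N ^ (-(2 * x)) - S)
      (N ^ (-(2 * x)) * (B x * log N - A x)) x := fun x hx =>
    ((((hB x hx).fun_neg.div_const 2).mul
      (((hasDerivAt_id' x).const_mul 2).fun_neg.const_rpow hN)).sub_const S).congr_deriv (by ring)
  refine strictAntiOn_of_deriv_neg (convex_Icc a b)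
    (fun x hx => (hF x hx).continuousAt.continuousWithinAt) fun x hx => ?_
  rw [interior_Icc] at hx
  rw [(hF x (Ioo_subset_Icc_self hx)).deriv]
  exact mul_neg_of_pos_of_neg (rpow_pos_of_pos hN _) (by linarith [hlt x hx])

section GaussianKernel

variable {ι : Type*} (s : Finset ι) (a z : ι → ℝ)

noncomputable def gaussianEnergy (u : ℝ) : ℝ :=
  ∑ i ∈ s, ∑ j ∈ s, a i * a j * exp (-((z i - z j) ^ 2 * u))

/-- Expanding `exp (2 z_i z_j u)` in its power series writes the Gaussian energy as a series of
squares `∑ₙ (2u)ⁿ/n! (∑ᵢ aᵢ e^{-zᵢ² u} zᵢⁿ)²`. -/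
theorem gaussianEnergy_nonneg {u : ℝ} (hu : 0 ≤ u) : 0 ≤ gaussianEnergy s a z u := by
  set b : ι → ℕ → ℝ := fun i n => a i * exp (-(z i ^ 2 * u)) * z i ^ n
  set w : ℕ → ℝ := fun n => (2 * u) ^ n / n.factorial
  have hterm : ∀ i j, HasSum (fun n => w n * (b i n * b j n))
      (a i * a j * exp (-((z i - z j) ^ 2 * u))) := by
    intro i j
    have hexp := NormedSpace.expSeries_div_hasSum_exp (2 * z i * z j * u)
    rw [← exp_eq_exp_ℝ] at hexp
    have hval : a i * a j * exp (-((z i - z j) ^ 2 * u)) =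
        a i * exp (-(z i ^ 2 * u)) * (a j * exp (-(z j ^ 2 * u))) * exp (2 * z i * z j * u) := by
      rw [show -((z i - z j) ^ 2 * u) = -(z i ^ 2 * u) + -(z j ^ 2 * u) + 2 * z i * z j * u by ring,
        exp_add, exp_add]
      ring
    rw [hval]
    exact (hexp.mul_left _).congr_fun fun n => by simp only [w, b]; ring
  have hsum := hasSum_sum fun i (_ : i ∈ s) => hasSum_sum fun j (_ : j ∈ s) => hterm i j
  refine hsum.nonneg fun n => ?_
  have hw : 0 ≤ w n := by positivity
  calc (0 : ℝ) ≤ w n * (∑ i ∈ s, b i n) ^ 2 := by positivity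
    _ = ∑ i ∈ s, ∑ j ∈ s, w n * (b i n * b j n) := by
      rw [sq, sum_mul_sum, mul_sum]
      exact sum_congr rfl fun i _ => mul_sum _ _ _

theorem tendsto_gaussianEnergy_atTop (hz : InjOn z s) :
    Tendsto (gaussianEnergy s a z) atTop (𝓝 (∑ i ∈ s, a i ^ 2)) := by
  classical
  have hdiag : ∀ i ∈ s, Tendsto (fun u => ∑ j ∈ s, a i * a j * exp (-((z i - z j) ^ 2 * u)))
      atTop (𝓝 (a i ^ 2)) := by
    intro i hi
    suffices Tendsto (fun u => ∑ j ∈ s, a i * a j * exp (-((z i - z j) ^ 2 * u)))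
        atTop (𝓝 (∑ j ∈ s, if i = j then a i ^ 2 else 0)) by simpa [hi] using this
    refine tendsto_finsetSum _ fun j hj => ?_
    split_ifs with hij
    · subst hij
      simp [sq]
    · have hpos : 0 < (z i - z j) ^ 2 := by
        have := sub_ne_zero.2 fun h => hij (hz hi hj h)
        positivity
      simpa using (tendsto_exp_neg_atTop_nhds_zero.comp
        (tendsto_id.const_mul_atTop hpos)).const_mul (a i * a j)
  exact tendsto_finsetSum s hdiag

end GaussianKernel

theorem integrableOn_Ioc_rpow_neg {x : ℝ} (hx : x < 1) :
    IntegrableOn (fun u : ℝ => u ^ (-x)) (Ioc 0 1) := by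
  rw [← intervalIntegrable_iff_integrableOn_Ioc_of_le zero_le_one]
  exact intervalIntegral.intervalIntegrable_rpow' (by linarith)

theorem integral_Ioc_rpow_neg {x : ℝ} (hx : x < 1) :
    ∫ u in Ioc 0 1, u ^ (-x) = 1 / (1 - x) := by
  rw [← intervalIntegral.integral_of_le zero_le_one, integral_rpow (.inl (by linarith)),
    one_rpow, zero_rpow (by linarith)]
  ring_nf

theorem integrableOn_one_sub_exp_mul_rpow {x : ℝ} (hx0 : 0 < x) (hx1 : x < 1) {c : ℝ}
    (hc : 0 ≤ c) : IntegrableOn (fun u => (1 - exp (-(c * u))) * u ^ (-1 - x)) (Ioi 0) := by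
  have hmeas : AEStronglyMeasurable (fun u => (1 - exp (-(c * u))) * u ^ (-1 - x))
      (volume.restrict (Ioi 0)) :=
    (ContinuousOn.mul (by fun_prop)
      (continuousOn_id.rpow_const fun u hu => .inl (ne_of_gt hu))).aestronglyMeasurable
      measurableSet_Ioi
  have hnorm : ∀ u ∈ Ioi (0 : ℝ),
      ‖(1 - exp (-(c * u))) * u ^ (-1 - x)‖ = (1 - exp (-(c * u))) * u ^ (-1 - x) :=
    fun u hu => Real.norm_of_nonneg <| mul_nonneg
      (sub_nonneg.2 (exp_le_one_iff.2 (neg_nonpos.2 (mul_nonneg hc (le_of_lt hu)))))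
      (rpow_nonneg (le_of_lt hu) _)
  rw [← Ioc_union_Ioi_eq_Ioi zero_le_one]
  refine IntegrableOn.union ?_ ?_
  · refine ((integrableOn_Ioc_rpow_neg hx1).const_mul c).mono'
      (hmeas.mono_set Ioc_subset_Ioi_self) ?_
    filter_upwards [ae_restrict_mem measurableSet_Ioc] with u hu
    rw [hnorm u hu.1]
    calc (1 - exp (-(c * u))) * u ^ (-1 - x) ≤ c * u * u ^ (-1 - x) :=
          mul_le_mul_of_nonneg_right (by linarith [one_sub_le_exp_neg (c * u)])
            (rpow_nonneg hu.1.le _)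
      _ = c * u ^ (-x) := by
          rw [mul_assoc, ← rpow_one_add' hu.1.le (by intro h; linarith)]
          ring_nf
  · refine (integrableOn_Ioi_rpow_of_lt (a := -1 - x) (by linarith) one_pos).mono'
      (hmeas.mono_set (Ioi_subset_Ioi zero_le_one)) ?_
    filter_upwards [ae_restrict_mem measurableSet_Ioi] with u hu
    rw [hnorm u (show (0 : ℝ) < u from zero_lt_one.trans hu)]
    exact mul_le_of_le_one_left (rpow_nonneg (zero_le_one.trans hu.le) _)
      (sub_le_self _ (exp_pos _).le)

/-- For `0 < x < 1`, `rpowKernel x = Γ(1 - x) / x`; it normalises the Bernstein representation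
`t ^ x = (rpowKernel x)⁻¹ * ∫ u in Ioi 0, (1 - exp (-(t * u))) * u ^ (-1 - x)` of `t ↦ t ^ x`. -/
noncomputable def rpowKernel (x : ℝ) : ℝ := ∫ u in Ioi 0, (1 - exp (-u)) * u ^ (-1 - x)

theorem integral_one_sub_exp_mul_rpow {x c : ℝ} (hc : 0 < c) :
    ∫ u in Ioi 0, (1 - exp (-(c * u))) * u ^ (-1 - x) = c ^ x * rpowKernel x := by
  have hscale : ∀ u ∈ Ioi (0 : ℝ), (1 - exp (-(c * u))) * u ^ (-1 - x) =
      c ^ (1 + x) * ((1 - exp (-(c * u))) * (c * u) ^ (-1 - x)) := by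
    intro u hu
    rw [mul_rpow hc.le (le_of_lt hu), mul_left_comm, ← mul_assoc (c ^ (1 + x)), ← rpow_add hc]
    norm_num
  rw [setIntegral_congr_fun measurableSet_Ioi hscale, integral_const_mul,
    integral_comp_mul_left_Ioi (fun v => (1 - exp (-v)) * v ^ (-1 - x)) 0 hc, mul_zero,
    smul_eq_mul, rpowKernel, ← mul_assoc, ← rpow_neg_one, ← rpow_add hc]
  norm_num

theorem abs_rpow_two_mul_mul_rpowKernel {x : ℝ} (hx : 0 < x) (t : ℝ) :
    |t| ^ (2 * x) * rpowKernel x = ∫ u in Ioi 0, (1 - exp (-(t ^ 2 * u))) * u ^ (-1 - x) := by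
  rcases eq_or_ne t 0 with rfl | ht
  · simp [zero_rpow (by positivity : 2 * x ≠ 0)]
  · rw [integral_one_sub_exp_mul_rpow (by positivity), rpow_mul (abs_nonneg t), ← sq_abs t]
    norm_num

theorem rpowKernel_pos {x : ℝ} (hx0 : 0 < x) (hx1 : x < 1) : 0 < rpowKernel x := by
  have hint := integrableOn_one_sub_exp_mul_rpow hx0 hx1 zero_le_one
  simp only [one_mul] at hint
  have hpos : ∀ u ∈ Ioi (0 : ℝ), 0 < (1 - exp (-u)) * u ^ (-1 - x) := fun u hu =>
    mul_pos (by linarith [exp_lt_one_iff.2 (neg_lt_zero.2 hu)]) (rpow_pos_of_pos hu _)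
  rw [rpowKernel, setIntegral_pos_iff_support_of_nonneg_ae _ hint]
  · have hsupp :
        Function.support (fun u => (1 - exp (-u)) * u ^ (-1 - x)) ∩ Set.Ioi 0 = Set.Ioi 0 :=
      inter_eq_right.2 fun u hu => (hpos u hu).ne'
    rw [hsupp]
    simp
  · filter_upwards [ae_restrict_mem measurableSet_Ioi] with u hu using (hpos u hu).le

theorem rpowKernel_le_one_div_add {x : ℝ} (hx0 : 0 < x) (hx1 : x < 1) :
    rpowKernel x ≤ 1 / (1 - x) + 1 / x := by
  have hint := integrableOn_one_sub_exp_mul_rpow hx0 hx1 zero_le_one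
  simp only [one_mul] at hint
  rw [← Ioc_union_Ioi_eq_Ioi zero_le_one] at hint
  rw [rpowKernel, ← Ioc_union_Ioi_eq_Ioi zero_le_one, setIntegral_union Ioc_disjoint_Ioi_same measurableSet_Ioi (hint.mono_set subset_union_left)
    (hint.mono_set subset_union_right)]
  gcongr
  · rw [← integral_Ioc_rpow_neg hx1]
    refine setIntegral_mono_on (hint.mono_set subset_union_left) (integrableOn_Ioc_rpow_neg hx1)
      measurableSet_Ioc fun u hu => ?_
    calc (1 - exp (-u)) * u ^ (-1 - x) ≤ u * u ^ (-1 - x) :=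
          mul_le_mul_of_nonneg_right (by linarith [one_sub_le_exp_neg u]) (rpow_nonneg hu.1.le _)
      _ = u ^ (-x) := by
          rw [← rpow_one_add' hu.1.le (by intro h; linarith)]
          ring_nf
  · have hval : ∫ u in Ioi (1 : ℝ), u ^ (-1 - x) = 1 / x := by
      rw [integral_Ioi_rpow_of_lt (by linarith) one_pos, one_rpow,
        show -1 - x + 1 = -x by ring, neg_div_neg_eq]
    rw [← hval]
    refine setIntegral_mono_on (hint.mono_set subset_union_right)
      (integrableOn_Ioi_rpow_of_lt (by linarith) one_pos) measurableSet_Ioi fun u hu => ?_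
    exact mul_le_of_le_one_left (rpow_nonneg (zero_le_one.trans hu.le) _)
      (sub_le_self _ (exp_pos _).le)

section Energy

variable {ι : Type*} (s : Finset ι) (a z : ι → ℝ)

noncomputable def powerEnergy (x : ℝ) : ℝ :=
  ∑ i ∈ s, ∑ j ∈ s, a i * a j * |z i - z j| ^ (2 * x)

noncomputable def logPowerEnergy (x : ℝ) : ℝ :=
  ∑ i ∈ s, ∑ j ∈ s, a i * a j * log |z i - z j| * |z i - z j| ^ (2 * x)

variable {s a z}

theorem gaussianEnergy_mul_eq_neg_sum (hsum : ∑ i ∈ s, a i = 0) (u c : ℝ) :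
    gaussianEnergy s a z u * c =
      -∑ i ∈ s, ∑ j ∈ s, a i * a j * ((1 - exp (-((z i - z j) ^ 2 * u))) * c) := by
  have hsq : ∑ i ∈ s, ∑ j ∈ s, a i * a j * c = 0 := by
    simp only [← sum_mul, ← sum_mul_sum, hsum, zero_mul]
  rw [← zero_sub, ← hsq, gaussianEnergy, sum_mul, ← sum_sub_distrib]
  refine sum_congr rfl fun i _ => ?_
  rw [sum_mul, ← sum_sub_distrib]
  exact sum_congr rfl fun j _ => by ring

theorem integrableOn_gaussianEnergy_mul_rpow (hsum : ∑ i ∈ s, a i = 0) {x : ℝ} (hx0 : 0 < x)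
    (hx1 : x < 1) : IntegrableOn (fun u => gaussianEnergy s a z u * u ^ (-1 - x)) (Ioi 0) := by
  simp only [gaussianEnergy_mul_eq_neg_sum hsum]
  exact (integrable_finsetSum _ fun i _ => integrable_finsetSum _ fun j _ =>
    (integrableOn_one_sub_exp_mul_rpow hx0 hx1 (sq_nonneg _)).const_mul _).neg

theorem powerEnergy_mul_rpowKernel (hsum : ∑ i ∈ s, a i = 0) {x : ℝ} (hx0 : 0 < x) (hx1 : x < 1) :
    powerEnergy s a z x * rpowKernel x = -∫ u in Ioi 0, gaussianEnergy s a z u * u ^ (-1 - x) := by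
  have hint : ∀ i j, IntegrableOn
      (fun u => a i * a j * ((1 - exp (-((z i - z j) ^ 2 * u))) * u ^ (-1 - x))) (Ioi 0) :=
    fun i j => (integrableOn_one_sub_exp_mul_rpow hx0 hx1 (sq_nonneg _)).const_mul _
  simp only [gaussianEnergy_mul_eq_neg_sum hsum, integral_neg, neg_neg]
  rw [integral_finsetSum _ fun i _ => integrable_finsetSum _ fun j _ => hint i j, powerEnergy,
    sum_mul]
  refine sum_congr rfl fun i _ => ?_
  rw [integral_finsetSum _ fun j _ => hint i j, sum_mul]
  refine sum_congr rfl fun j _ => ?_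
  rw [integral_const_mul, ← abs_rpow_two_mul_mul_rpowKernel hx0, mul_assoc]

theorem exists_pos_le_integral_gaussianEnergy_mul_rpow (hsum : ∑ i ∈ s, a i = 0)
    (hz : InjOn z s) (ha : ∃ i ∈ s, a i ≠ 0) :
    ∃ ε > 0, ∀ x ∈ Ioo (0 : ℝ) 1, ε ≤ ∫ u in Ioi 0, gaussianEnergy s a z u * u ^ (-1 - x) := by
  obtain ⟨i, hi, hai⟩ := ha
  set L := ∑ i ∈ s, a i ^ 2
  have hL : 0 < L := sum_pos' (fun j _ => sq_nonneg _) ⟨i, hi, by positivity⟩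
  obtain ⟨c, hc⟩ := eventually_atTop.1 ((tendsto_gaussianEnergy_atTop s a z hz).eventually
    (lt_mem_nhds (half_lt_self hL)))
  set m := max c 1
  refine ⟨L / 2 * (m + 1) ^ (-2 : ℝ), by positivity, fun x hx => ?_⟩
  have hint := integrableOn_gaussianEnergy_mul_rpow (z := z) hsum hx.1 hx.2
  have hm : Ioc m (m + 1) ⊆ Ioi 0 := fun u hu => lt_of_lt_of_le (by positivity) hu.1.le
  calc L / 2 * (m + 1) ^ (-2 : ℝ) = ∫ _ in Ioc m (m + 1), L / 2 * (m + 1) ^ (-2 : ℝ) := by simp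
    _ ≤ ∫ u in Ioc m (m + 1), gaussianEnergy s a z u * u ^ (-1 - x) := by
      refine setIntegral_mono_on (integrableOn_const (by simp)) (hint.mono_set hm)
        measurableSet_Ioc fun u hu => ?_
      have hu1 : 1 ≤ u := (le_max_right c 1).trans hu.1.le
      have hpow : (m + 1) ^ (-2 : ℝ) ≤ u ^ (-1 - x) :=
        calc (m + 1) ^ (-2 : ℝ) ≤ u ^ (-2 : ℝ) :=
              rpow_le_rpow_of_nonpos (by linarith) hu.2 (by norm_num)
          _ ≤ u ^ (-1 - x) := rpow_le_rpow_of_exponent_le hu1 (by linarith [hx.2])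
      exact mul_le_mul (hc u ((le_max_left c 1).trans hu.1.le)).le hpow (by positivity)
        (gaussianEnergy_nonneg s a z (by linarith))
    _ ≤ ∫ u in Ioi 0, gaussianEnergy s a z u * u ^ (-1 - x) := by
      refine setIntegral_mono_set hint ?_ hm.eventuallyLE
      filter_upwards [ae_restrict_mem measurableSet_Ioi] with u hu
      exact mul_nonneg (gaussianEnergy_nonneg s a z (le_of_lt hu)) (rpow_nonneg (le_of_lt hu) _)

theorem exists_pos_powerEnergy_le (hsum : ∑ i ∈ s, a i = 0) (hz : InjOn z s)
    (ha : ∃ i ∈ s, a i ≠ 0) :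
    ∃ ε > 0, ∀ x ∈ Ioo (0 : ℝ) 1, powerEnergy s a z x ≤ -(ε * (x * (1 - x))) := by
  obtain ⟨ε, hε, hJ⟩ := exists_pos_le_integral_gaussianEnergy_mul_rpow hsum hz ha
  refine ⟨ε, hε, fun x hx => ?_⟩
  have hK := rpowKernel_pos hx.1 hx.2
  have hKle : rpowKernel x * (x * (1 - x)) ≤ 1 := by
    have h := rpowKernel_le_one_div_add hx.1 hx.2
    rw [div_add_div _ _ (by linarith [hx.2]) hx.1.ne', le_div_iff₀ (by nlinarith [hx.1, hx.2])] at h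
    linarith
  have hBK : powerEnergy s a z x * rpowKernel x ≤ -ε := by
    rw [powerEnergy_mul_rpowKernel hsum hx.1 hx.2, neg_le_neg_iff]
    exact hJ x hx
  by_contra! h
  nlinarith [mul_lt_mul_of_pos_right h hK]

theorem powerEnergy_neg (hsum : ∑ i ∈ s, a i = 0) (hz : InjOn z s) (ha : ∃ i ∈ s, a i ≠ 0)
    {x : ℝ} (hx : x ∈ Ioo (0 : ℝ) 1) : powerEnergy s a z x < 0 := by
  obtain ⟨ε, hε, hle⟩ := exists_pos_powerEnergy_le hsum hz ha
  have : 0 < ε * (x * (1 - x)) := mul_pos hε (mul_pos hx.1 (sub_pos.2 hx.2))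
  linarith [hle x hx]

theorem powerEnergy_one (hsum : ∑ i ∈ s, a i = 0) (hmom : ∑ i ∈ s, a i * z i = 0) :
    powerEnergy s a z 1 = 0 := by
  have hterm : ∀ i j, a i * a j * |z i - z j| ^ (2 * (1 : ℝ)) =
      a i * z i ^ 2 * a j - 2 * (a i * z i) * (a j * z j) + a i * (a j * z j ^ 2) := by
    intro i j
    rw [mul_one, rpow_two, sq_abs]
    ring
  simp only [powerEnergy, hterm, sum_add_distrib, sum_sub_distrib, ← mul_sum, ← sum_mul, hsum, hmom]
  ring

theorem hasDerivAt_powerEnergy {x : ℝ} (hx : 0 < x) :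
    HasDerivAt (powerEnergy s a z) (2 * logPowerEnergy s a z x) x := by
  refine (HasDerivAt.fun_sum fun i (_ : i ∈ s) => HasDerivAt.fun_sum fun j (_ : j ∈ s) =>
    (hasDerivAt_rpow_two_mul (abs_nonneg (z i - z j)) hx).const_mul (a i * a j)).congr_deriv ?_
  rw [logPowerEnergy, mul_sum]
  exact sum_congr rfl fun i _ => by
    rw [mul_sum]
    exact sum_congr rfl fun j _ => by ring

theorem continuousAt_logPowerEnergy {x : ℝ} (hx : 0 < x) :
    ContinuousAt (logPowerEnergy s a z) x :=
  tendsto_finsetSum _ fun i _ => tendsto_finsetSum _ fun j _ =>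
    (hasDerivAt_rpow_two_mul (abs_nonneg (z i - z j)) hx).continuousAt.const_mul _

theorem logPowerEnergy_one_pos (hsum : ∑ i ∈ s, a i = 0) (hmom : ∑ i ∈ s, a i * z i = 0)
    (hz : InjOn z s) (ha : ∃ i ∈ s, a i ≠ 0) : 0 < logPowerEnergy s a z 1 := by
  obtain ⟨ε, hε, hle⟩ := exists_pos_powerEnergy_le hsum hz ha
  have h := (hasDerivAt_powerEnergy (s := s) (a := a) (z := z) one_pos).le_of_forall_Ioo_le
    (δ := ε / 2) (by norm_num : (1 / 2 : ℝ) < 1) fun y hy => by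
      rw [powerEnergy_one hsum hmom]
      nlinarith [hle y ⟨by linarith [hy.1], hy.2⟩,
        mul_nonneg (mul_nonneg hε.le (sub_nonneg.2 hy.2.le)) (sub_nonneg.2 hy.1.le)]
  linarith

end Energy

theorem FN_strictAnti_and_unique_root_general
    (ℓ p : ℕ) (hp : 2 ≤ p) (α : ℕ → ℝ)
    (hzero : ∀ r < p, ∑ q ∈ Finset.range (ℓ + 1), α q * (q : ℝ) ^ r = 0)
    (hne : ∑ q ∈ Finset.range (ℓ + 1), α q * (q : ℝ) ^ p ≠ 0)
    (S : ℝ) (N : ℕ)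
    (hN : (N : ℝ) > Real.exp (sSup ((fun x : ℝ =>
      (∑ q ∈ Finset.range (ℓ + 1), ∑ r ∈ Finset.range (ℓ + 1),
        α q * α r * Real.log |(q : ℝ) - (r : ℝ)| * |(q : ℝ) - (r : ℝ)| ^ (2 * x)) /
      (∑ q ∈ Finset.range (ℓ + 1), ∑ r ∈ Finset.range (ℓ + 1),
        α q * α r * |(q : ℝ) - (r : ℝ)| ^ (2 * x))) '' Set.Icc (1/2 : ℝ) 1))) :
    StrictAntiOn (fun x : ℝ =>
      ((-∑ q ∈ Finset.range (ℓ + 1), ∑ r ∈ Finset.range (ℓ + 1),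
        α q * α r * |(q : ℝ) - (r : ℝ)| ^ (2 * x)) / 2) * (N : ℝ) ^ (-(2 * x)) - S)
      (Set.Icc (1/2 : ℝ) 1) ∧
    ∀ x ∈ Set.Icc (1/2 : ℝ) 1, ∀ y ∈ Set.Icc (1/2 : ℝ) 1,
      ((-∑ q ∈ Finset.range (ℓ + 1), ∑ r ∈ Finset.range (ℓ + 1),
        α q * α r * |(q : ℝ) - (r : ℝ)| ^ (2 * x)) / 2) * (N : ℝ) ^ (-(2 * x)) - S = 0 →
      ((-∑ q ∈ Finset.range (ℓ + 1), ∑ r ∈ Finset.range (ℓ + 1),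
        α q * α r * |(q : ℝ) - (r : ℝ)| ^ (2 * y)) / 2) * (N : ℝ) ^ (-(2 * y)) - S = 0 →
      x = y := by
  set s := Finset.range (ℓ + 1)
  have hsum : ∑ q ∈ s, α q = 0 := by simpa using hzero 0 (by omega)
  have hmom : ∑ q ∈ s, α q * (q : ℝ) = 0 := by simpa using hzero 1 (by omega)
  have hα : ∃ q ∈ s, α q ≠ 0 := by
    contrapose! hne
    exact sum_eq_zero fun q hq => by rw [hne q hq, zero_mul]
  have hinj : InjOn (Nat.cast : ℕ → ℝ) s := Nat.cast_injective.injOn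
  have hneg : ∀ x ∈ Ico (1 / 2 : ℝ) 1, powerEnergy s α Nat.cast x < 0 := fun x hx =>
    powerEnergy_neg hsum hinj hα ⟨by linarith [hx.1], hx.2⟩
  have hbdd : BddAbove ((fun x => logPowerEnergy s α Nat.cast x / powerEnergy s α Nat.cast x) ''
      Icc (1 / 2 : ℝ) 1) :=
    bddAbove_image_div_Icc (by norm_num)
      (fun x hx => (continuousAt_logPowerEnergy (by linarith [hx.1])).continuousWithinAt)
      (fun x hx => (hasDerivAt_powerEnergy (by linarith [hx.1])).continuousAt.continuousWithinAt)
      hneg (powerEnergy_one hsum hmom).le (logPowerEnergy_one_pos hsum hmom hinj hα)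
  have hanti := strictAntiOn_neg_div_two_mul_rpow_sub S ((exp_pos _).trans hN)
    (fun x hx => hasDerivAt_powerEnergy (by linarith [hx.1]))
    fun x hx => mul_log_lt_of_exp_sSup_lt hbdd hN (Ioo_subset_Icc_self hx)
      (hneg x (Ioo_subset_Ico_self hx))
  exact ⟨hanti, fun x hx y hy hx0 hy0 => hanti.injOn hx hy (hx0.trans hy0.symm)⟩

/-- If `N > exp(max_{x∈[1/2,1]} (∑ α_q α_r log|q-r| |q-r|^{2x}) / (∑ α_q α_r |q-r|^{2x}))`,
then `F_N(x) = (c(x)/2) N^{-2x} - S` is strictly decreasing on `[1/2,1]`, hence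
`F_N(x) = 0` has at most one solution there. -/
theorem FN_strictAnti_and_unique_root (H : ℝ) (hH : H ∈ Set.Ioo (1/2 : ℝ) 1)
    (ℓ p : ℕ) (hp : 2 ≤ p) (α : ℕ → ℝ)
    (hzero : ∀ r < p, ∑ q ∈ Finset.range (ℓ + 1), α q * (q : ℝ) ^ r = 0)
    (hne : ∑ q ∈ Finset.range (ℓ + 1), α q * (q : ℝ) ^ p ≠ 0)
    (S : ℝ) (N : ℕ)
    (hN : (N : ℝ) > Real.exp (sSup ((fun x : ℝ =>
      (∑ q ∈ Finset.range (ℓ + 1), ∑ r ∈ Finset.range (ℓ + 1),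
        α q * α r * Real.log |(q : ℝ) - (r : ℝ)| * |(q : ℝ) - (r : ℝ)| ^ (2 * x)) /
      (∑ q ∈ Finset.range (ℓ + 1), ∑ r ∈ Finset.range (ℓ + 1),
        α q * α r * |(q : ℝ) - (r : ℝ)| ^ (2 * x))) '' Set.Icc (1/2 : ℝ) 1))) :
    StrictAntiOn (fun x : ℝ =>
      ((-∑ q ∈ Finset.range (ℓ + 1), ∑ r ∈ Finset.range (ℓ + 1),
        α q * α r * |(q : ℝ) - (r : ℝ)| ^ (2 * x)) / 2) * (N : ℝ) ^ (-(2 * x)) - S)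
      (Set.Icc (1/2 : ℝ) 1) ∧
    ∀ x ∈ Set.Icc (1/2 : ℝ) 1, ∀ y ∈ Set.Icc (1/2 : ℝ) 1,
      ((-∑ q ∈ Finset.range (ℓ + 1), ∑ r ∈ Finset.range (ℓ + 1),
        α q * α r * |(q : ℝ) - (r : ℝ)| ^ (2 * x)) / 2) * (N : ℝ) ^ (-(2 * x)) - S = 0 →
      ((-∑ q ∈ Finset.range (ℓ + 1), ∑ r ∈ Finset.range (ℓ + 1),
        α q * α r * |(q : ℝ) - (r : ℝ)| ^ (2 * y)) / 2) * (N : ℝ) ^ (-(2 * y)) - S = 0 →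
      x = y :=
  FN_strictAnti_and_unique_root_general ℓ p hp α hzero hne S N hN
end

section
/- Let H ∈ (1/2,1), let α be a filter of order p ≥ 2, c(x) = -∑_{q,r} α_q α_r |q-r|^{2x}, and suppose N^{2H} S_N → c(H)/2 almost surely as N → ∞. Let Ĥ_N ∈ [1/2,1] satisfy c(Ĥ_N) N^{-2Ĥ_N} = 2 S_N for each (large) N. Then almost surely Ĥ_N → H, and moreover (H - Ĥ_N) log N → 0 almost surely. -/
/-!
For `0 < a < 1`, `|t| ^ (2a)` is a positive multiple of `∫₀^∞ (1 - exp (-t² u)) u^(-1-a) du`.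
Since `∑ α_q = 0`, this turns `c(a) = -∑ α_q α_r |q - r| ^ (2a)` into a positive multiple of
`∫₀^∞ (∑ α_q α_r exp (-(q - r)² u)) u^(-1-a) du`, whose integrand is a positive semidefinite
Gaussian form, positive for large `u`; so `c > 0` on `(0, 1)`. (At `a = 1` the moment conditions
give `c(1) = 0`, so `c` is bounded below only on `[1/2, H]`.)

Taking logarithms in the estimating equation,
`2 (Ĥ_N - H) log N = log c(Ĥ_N) - log (2 N^(2H) S_N)`, and the last term converges to `log c(H)`.
The right side is bounded above since `c` is bounded on `[1/2, 1]`, and below when `Ĥ_N ≤ H`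
since `c` is bounded away from `0` on `[1/2, H]`. Hence `Ĥ_N - H = O(1 / log N)`, so `Ĥ_N → H`;
then `c(Ĥ_N) → c(H)` and the right side tends to `0`.
-/

open Finset MeasureTheory Filter

open Real Set Topology

theorem sum_sum_mul_exp_neg_sq_sub_mul_nonneg {ι : Type*} (s : Finset ι) (x α : ι → ℝ)
    {u : ℝ} (hu : 0 ≤ u) :
    0 ≤ ∑ i ∈ s, ∑ j ∈ s, α i * α j * exp (-((x i - x j) ^ 2 * u)) := by
  set β : ι → ℝ := fun i => α i * exp (-(x i ^ 2 * u))
  -- `exp (-(x - y)² u) = exp (-x² u) exp (-y² u) exp (2u x y)`, and `exp (2u x y)` is a sum of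
  -- the rank-one kernels `(2u)ᵏ/k! xᵏ yᵏ`
  have hterm : ∀ i j, HasSum (fun k : ℕ => β i * β j * ((2 * u * x i * x j) ^ k / k.factorial))
      (α i * α j * exp (-((x i - x j) ^ 2 * u))) := by
    intro i j
    have h := (NormedSpace.expSeries_div_hasSum_exp (2 * u * x i * x j)).mul_left (β i * β j)
    rw [← Real.exp_eq_exp_ℝ] at h
    rwa [show -((x i - x j) ^ 2 * u) = -(x i ^ 2 * u) + -(x j ^ 2 * u) + 2 * u * x i * x j by ring,
      exp_add, exp_add, show α i * α j * (exp (-(x i ^ 2 * u)) * exp (-(x j ^ 2 * u))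
        * exp (2 * u * x i * x j)) = β i * β j * exp (2 * u * x i * x j) by ring]
  refine (hasSum_sum fun i _ => hasSum_sum fun j _ => hterm i j).nonneg fun k => ?_
  have hsq : ∑ i ∈ s, ∑ j ∈ s, β i * β j * ((2 * u * x i * x j) ^ k / k.factorial)
      = (∑ i ∈ s, β i * x i ^ k) ^ 2 * ((2 * u) ^ k / k.factorial) := by
    rw [sq, sum_mul_sum, sum_mul]
    refine sum_congr rfl fun i _ => ?_
    rw [sum_mul]
    refine sum_congr rfl fun j _ => ?_
    ring
  rw [hsq]
  positivity

theorem tendsto_sum_sum_mul_exp_neg_sq_sub_mul {ι : Type*} (s : Finset ι) {x : ι → ℝ}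
    (hx : InjOn x s) (α : ι → ℝ) :
    Tendsto (fun u => ∑ i ∈ s, ∑ j ∈ s, α i * α j * exp (-((x i - x j) ^ 2 * u))) atTop
      (𝓝 (∑ i ∈ s, α i * α i)) := by
  classical
  have hterm : ∀ i ∈ s, ∀ j ∈ s, Tendsto (fun u => α i * α j * exp (-((x i - x j) ^ 2 * u)))
      atTop (𝓝 (if i = j then α i * α j else 0)) := by
    intro i hi j hj
    split_ifs with hij
    · simp [hij]
    · have hd : 0 < (x i - x j) ^ 2 := by
        have : x i ≠ x j := fun h => hij (hx hi hj h)
        positivity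
      simpa using (tendsto_exp_atBot.comp (tendsto_neg_atTop_atBot.comp
        (tendsto_id.const_mul_atTop hd))).const_mul (α i * α j)
  simpa using tendsto_finsetSum s fun i hi => tendsto_finsetSum s (hterm i hi)

theorem continuousOn_one_sub_exp_neg_mul_mul_rpow (c a : ℝ) :
    ContinuousOn (fun u => (1 - exp (-(c * u))) * u ^ (-1 - a)) (Ioi 0) :=
  ContinuousOn.mul (by fun_prop) (continuousOn_id.rpow_const fun u hu => Or.inl (ne_of_gt hu))

theorem integrableOn_one_sub_exp_neg_mul_mul_rpow {c a : ℝ} (hc : 0 ≤ c) (ha0 : 0 < a)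
    (ha1 : a < 1) :
    IntegrableOn (fun u => (1 - exp (-(c * u))) * u ^ (-1 - a)) (Ioi 0) := by
  have hmeas (t : Set ℝ) (ht : t ⊆ Ioi 0) (hmt : MeasurableSet t) :
      AEStronglyMeasurable (fun u => (1 - exp (-(c * u))) * u ^ (-1 - a)) (volume.restrict t) :=
    ((continuousOn_one_sub_exp_neg_mul_mul_rpow c a).mono ht).aestronglyMeasurable hmt
  have hnear : IntegrableOn (fun u => (1 - exp (-(c * u))) * u ^ (-1 - a)) (Ioc 0 1) := by
    refine (((intervalIntegral.intervalIntegrable_rpow' (r := -a) (by linarith)).1).const_mul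
      c).mono' (hmeas _ Ioc_subset_Ioi_self measurableSet_Ioc) ?_
    refine (ae_restrict_iff' measurableSet_Ioc).2 (ae_of_all _ fun u ⟨hu0, _⟩ => ?_)
    have hexp : 1 - exp (-(c * u)) ≤ c * u := by linarith [add_one_le_exp (-(c * u))]
    have hexp' : 0 ≤ 1 - exp (-(c * u)) :=
      sub_nonneg.2 (exp_le_one_iff.2 (neg_nonpos.2 (by positivity)))
    calc ‖(1 - exp (-(c * u))) * u ^ (-1 - a)‖ = (1 - exp (-(c * u))) * u ^ (-1 - a) := by
          rw [norm_of_nonneg (by positivity)]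
      _ ≤ c * u * u ^ (-1 - a) := by gcongr
      _ = c * u ^ (-a) := by
          rw [mul_assoc, ← rpow_one_add' hu0.le (by linarith)]
          ring_nf
  have hfar : IntegrableOn (fun u => (1 - exp (-(c * u))) * u ^ (-1 - a)) (Ioi 1) := by
    refine (integrableOn_Ioi_rpow_of_lt (by linarith : -1 - a < -1) one_pos).mono'
      (hmeas _ (Ioi_subset_Ioi zero_le_one) measurableSet_Ioi) ?_
    refine (ae_restrict_iff' measurableSet_Ioi).2 (ae_of_all _ fun u (hu : 1 < u) => ?_)
    have hexp' : 0 ≤ 1 - exp (-(c * u)) :=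
      sub_nonneg.2 (exp_le_one_iff.2 (neg_nonpos.2 (by positivity)))
    rw [norm_of_nonneg (by positivity)]
    exact mul_le_of_le_one_left (by positivity) (by linarith [exp_pos (-(c * u))])
  simpa only [Ioc_union_Ioi_eq_Ioi zero_le_one] using hnear.union hfar

theorem setIntegral_Ioi_pos_of_nonneg_of_eventually_pos {f : ℝ → ℝ} {b : ℝ}
    (hf : IntegrableOn f (Ioi b)) (hnonneg : ∀ u ∈ Ioi b, 0 ≤ f u)
    (hpos : ∀ᶠ u in atTop, 0 < f u) : 0 < ∫ u in Ioi b, f u := by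
  rw [setIntegral_pos_iff_support_of_nonneg_ae
    ((ae_restrict_iff' measurableSet_Ioi).2 (ae_of_all _ hnonneg)) hf]
  obtain ⟨M, hM⟩ := eventually_atTop.1 hpos
  calc (0 : ENNReal) < volume (Ioi (max M b)) := by simp [volume_Ioi]
    _ ≤ volume (Function.support f ∩ Ioi b) := measure_mono fun u (hu : max M b < u) =>
        ⟨(hM u ((le_max_left M b).trans hu.le)).ne', (le_max_right M b).trans_lt hu⟩

theorem integral_one_sub_exp_neg_mul_rpow_pos {a : ℝ} (ha0 : 0 < a) (ha1 : a < 1) :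
    0 < ∫ u in Ioi 0, (1 - exp (-u)) * u ^ (-1 - a) := by
  have hpos : ∀ u ∈ Ioi (0 : ℝ), 0 < (1 - exp (-u)) * u ^ (-1 - a) := fun u (hu : 0 < u) =>
    mul_pos (sub_pos.2 (exp_lt_one_iff.2 (neg_lt_zero.2 hu))) (rpow_pos_of_pos hu _)
  refine setIntegral_Ioi_pos_of_nonneg_of_eventually_pos ?_ (fun u hu => (hpos u hu).le)
    ((eventually_gt_atTop 0).mono hpos)
  simpa using integrableOn_one_sub_exp_neg_mul_mul_rpow zero_le_one ha0 ha1

theorem integral_one_sub_exp_neg_mul_mul_rpow {c a : ℝ} (hc : 0 ≤ c) (ha : 0 < a) :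
    ∫ u in Ioi 0, (1 - exp (-(c * u))) * u ^ (-1 - a)
      = c ^ a * ∫ u in Ioi 0, (1 - exp (-u)) * u ^ (-1 - a) := by
  rcases hc.eq_or_lt with rfl | hc
  · simp [zero_rpow ha.ne']
  have h := integral_comp_mul_left_Ioi (fun v => (1 - exp (-v)) * v ^ (-1 - a)) 0 hc
  rw [mul_zero, smul_eq_mul] at h
  have hcongr : ∫ u in Ioi 0, (1 - exp (-(c * u))) * (c * u) ^ (-1 - a)
      = c ^ (-1 - a) * ∫ u in Ioi 0, (1 - exp (-(c * u))) * u ^ (-1 - a) := by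
    rw [← integral_const_mul]
    refine setIntegral_congr_fun measurableSet_Ioi fun u (hu : 0 < u) => ?_
    rw [mul_rpow hc.le hu.le]
    ring
  rw [hcongr] at h
  have hpow : c ^ a * c * c ^ (-1 - a) = 1 := by
    rw [← rpow_add_one hc.ne', ← rpow_add hc, show a + 1 + (-1 - a) = 0 by ring, rpow_zero]
  calc ∫ u in Ioi 0, (1 - exp (-(c * u))) * u ^ (-1 - a)
      = c ^ a * c * (c ^ (-1 - a) * ∫ u in Ioi 0, (1 - exp (-(c * u))) * u ^ (-1 - a)) := by
        rw [← mul_assoc, hpow, one_mul]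
    _ = c ^ a * ∫ u in Ioi 0, (1 - exp (-u)) * u ^ (-1 - a) := by
        rw [h]
        field_simp

theorem neg_sum_sum_mul_abs_sub_rpow_pos {ι : Type*} (s : Finset ι) {x : ι → ℝ} (hx : InjOn x s)
    {α : ι → ℝ} (hsum : ∑ i ∈ s, α i = 0) (hα : ∃ i ∈ s, α i ≠ 0) {a : ℝ} (ha0 : 0 < a)
    (ha1 : a < 1) :
    0 < -∑ i ∈ s, ∑ j ∈ s, α i * α j * |x i - x j| ^ (2 * a) := by
  set I := ∫ u in Ioi 0, (1 - exp (-u)) * u ^ (-1 - a)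
  set G := fun u => ∑ i ∈ s, ∑ j ∈ s, α i * α j * exp (-((x i - x j) ^ 2 * u))
  set f := fun i j u => α i * α j * -((1 - exp (-((x i - x j) ^ 2 * u))) * u ^ (-1 - a))
  have hf_int : ∀ i j, IntegrableOn (f i j) (Ioi 0) := fun i j =>
    (integrableOn_one_sub_exp_neg_mul_mul_rpow (sq_nonneg (x i - x j)) ha0 ha1).neg.const_mul _
  have hf_integral : ∀ i j, ∫ u in Ioi 0, f i j u = -(α i * α j * |x i - x j| ^ (2 * a)) * I := by
    intro i j
    rw [integral_const_mul, integral_neg, integral_one_sub_exp_neg_mul_mul_rpow (sq_nonneg _) ha0,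
      ← sq_abs, ← rpow_two, ← rpow_mul (abs_nonneg _)]
    ring
  -- since `∑ α = 0`, the constant `1` of `1 - exp` contributes nothing to the double sum
  have hG : ∀ u, G u * u ^ (-1 - a) = ∑ i ∈ s, ∑ j ∈ s, f i j u := by
    intro u
    have hαα : ∑ i ∈ s, ∑ j ∈ s, α i * α j = 0 := by rw [← sum_mul_sum, hsum, zero_mul]
    calc G u * u ^ (-1 - a)
        = G u * u ^ (-1 - a) - (∑ i ∈ s, ∑ j ∈ s, α i * α j) * u ^ (-1 - a) := by
          rw [hαα, zero_mul, sub_zero]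
      _ = ∑ i ∈ s, ∑ j ∈ s, f i j u := by
          simp only [G, f, sum_mul, ← sum_sub_distrib]
          refine sum_congr rfl fun i _ => sum_congr rfl fun j _ => ?_
          ring
  have hG_pos : 0 < ∑ i ∈ s, α i * α i := by
    obtain ⟨i, hi, hαi⟩ := hα
    exact sum_pos' (fun j _ => mul_self_nonneg _) ⟨i, hi, mul_self_pos.2 hαi⟩
  have hintegral_pos : 0 < ∫ u in Ioi 0, G u * u ^ (-1 - a) := by
    refine setIntegral_Ioi_pos_of_nonneg_of_eventually_pos ?_ (fun u (hu : 0 < u) => ?_) ?_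
    · simp only [hG]
      exact integrable_finsetSum _ fun i _ => integrable_finsetSum _ fun j _ => hf_int i j
    · exact mul_nonneg (sum_sum_mul_exp_neg_sq_sub_mul_nonneg s x α hu.le) (rpow_nonneg hu.le _)
    · filter_upwards [(tendsto_sum_sum_mul_exp_neg_sq_sub_mul s hx α).eventually_const_lt hG_pos,
        eventually_gt_atTop 0] with u hGu hu
      exact mul_pos hGu (rpow_pos_of_pos hu _)
  have hintegral : ∫ u in Ioi 0, G u * u ^ (-1 - a)
      = (-∑ i ∈ s, ∑ j ∈ s, α i * α j * |x i - x j| ^ (2 * a)) * I := by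
    simp only [hG]
    rw [integral_finsetSum _ fun i _ => integrable_finsetSum _ fun j _ => hf_int i j]
    simp only [integral_finsetSum _ fun j _ => hf_int _ j, hf_integral, ← sum_mul, sum_neg_distrib]
  rw [hintegral] at hintegral_pos
  exact pos_of_mul_pos_left hintegral_pos (integral_one_sub_exp_neg_mul_rpow_pos ha0 ha1).le

theorem continuousOn_sum_sum_mul_abs_sub_rpow {ι : Type*} (s : Finset ι) (x α : ι → ℝ) :
    ContinuousOn (fun a : ℝ => ∑ i ∈ s, ∑ j ∈ s, α i * α j * |x i - x j| ^ (2 * a)) (Ioi 0) :=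
  continuousOn_finsetSum s fun i _ => continuousOn_finsetSum s fun j _ =>
    continuousOn_const.mul (continuousOn_const.rpow (continuousOn_const.mul continuousOn_id)
      fun a (ha : 0 < a) => Or.inr (by positivity))

theorem eq_mul_rpow_of_mul_rpow_neg_eq {x y h H S : ℝ} (hx : 0 < x)
    (heq : y * x ^ (-(2 * h)) = 2 * S) : y = 2 * (x ^ (2 * H) * S) * x ^ (2 * (h - H)) := by
  have hcancel : x ^ (-(2 * h)) * (x ^ (2 * H) * x ^ (2 * (h - H))) = 1 := by
    rw [← rpow_add hx, ← rpow_add hx, show -(2 * h) + (2 * H + 2 * (h - H)) = 0 by ring, rpow_zero]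
  calc y = y * (x ^ (-(2 * h)) * (x ^ (2 * H) * x ^ (2 * (h - H)))) := by rw [hcancel, mul_one]
    _ = 2 * (x ^ (2 * H) * S) * x ^ (2 * (h - H)) := by rw [← mul_assoc, heq]; ring

theorem tendsto_of_isBoundedUnder_sub_mul_log {h : ℕ → ℝ} {H : ℝ}
    (hb : IsBoundedUnder (· ≤ ·) atTop (fun N : ℕ => |(h N - H) * log N|)) :
    Tendsto h atTop (𝓝 H) := by
  have hlog : Tendsto (fun N : ℕ => (log N)⁻¹) atTop (𝓝 0) :=
    tendsto_inv_atTop_zero.comp (tendsto_log_atTop.comp tendsto_natCast_atTop_atTop)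
  have hsub : Tendsto (fun N => h N - H) atTop (𝓝 0) := by
    refine (hlog.zero_mul_isBoundedUnder_le hb).congr' ?_
    filter_upwards [eventually_gt_atTop 1] with N hN
    have : log N ≠ 0 := (log_pos (by exact_mod_cast hN)).ne'
    field_simp
  simpa using hsub.add_const H

theorem isBoundedUnder_abs_sub_mul_log {c : ℝ → ℝ} {lo hi H : ℝ}
    (hc : ContinuousOn c (Icc lo hi)) (hpos : ∀ y ∈ Icc lo H, 0 < c y) (hH : H ∈ Icc lo hi)
    {h b : ℕ → ℝ} (hh : ∀ N, h N ∈ Icc lo hi) {β : ℝ} (hb : Tendsto b atTop (𝓝 β))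
    (hkey : ∀ᶠ N : ℕ in atTop, 0 < c (h N) ∧ log (c (h N)) - b N = 2 * ((h N - H) * log N)) :
    IsBoundedUnder (· ≤ ·) atTop (fun N : ℕ => |(h N - H) * log N|) := by
  obtain ⟨A, hA⟩ := isCompact_Icc.bddAbove_image hc
  obtain ⟨y₀, hy₀, hmin⟩ := isCompact_Icc.exists_isMinOn ⟨H, hH.1, le_rfl⟩
    (hc.mono (Icc_subset_Icc_right hH.2))
  -- for `h N > H` the sign of `h N - H` already bounds the product from below
  have hbound : ∀ᶠ N : ℕ in atTop, min 0 ((log (c y₀) - β - 1) / 2) ≤ (h N - H) * log N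
      ∧ (h N - H) * log N ≤ (log A - β + 1) / 2 := by
    filter_upwards [hkey, hb.eventually (Ioo_mem_nhds (sub_one_lt _) (lt_add_one _)),
      eventually_ge_atTop 1] with N ⟨hcN, hN⟩ ⟨hb1, hb2⟩ hN1
    have hupper : log (c (h N)) ≤ log A := log_le_log hcN (hA (mem_image_of_mem c (hh N)))
    refine ⟨?_, by linarith⟩
    rcases le_or_gt (h N) H with hle | hgt
    · have : log (c y₀) ≤ log (c (h N)) := log_le_log (hpos y₀ hy₀) (hmin ⟨(hh N).1, hle⟩)
      exact min_le_of_right_le (by linarith)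
    · exact min_le_of_left_le
        (mul_nonneg (sub_nonneg.2 hgt.le) (log_nonneg (by exact_mod_cast hN1)))
  exact isBoundedUnder_of_eventually_le (hbound.mono fun N hN => abs_le_max_abs_abs hN.1 hN.2)

theorem tendsto_and_tendsto_sub_mul_log_of_mul_rpow_neg_eq {c : ℝ → ℝ} {lo hi H : ℝ}
    (hc : ContinuousOn c (Icc lo hi)) (hpos : ∀ y ∈ Icc lo H, 0 < c y) (hH : H ∈ Icc lo hi)
    {h S : ℕ → ℝ} (hh : ∀ N, h N ∈ Icc lo hi)
    (hS : Tendsto (fun N : ℕ => (N : ℝ) ^ (2 * H) * S N) atTop (𝓝 (c H / 2)))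
    (heq : ∀ᶠ N : ℕ in atTop, c (h N) * (N : ℝ) ^ (-(2 * h N)) = 2 * S N) :
    Tendsto h atTop (𝓝 H) ∧ Tendsto (fun N : ℕ => (H - h N) * log N) atTop (𝓝 0) := by
  set L := fun N : ℕ => 2 * ((N : ℝ) ^ (2 * H) * S N)
  have hcH : 0 < c H := hpos H ⟨hH.1, le_rfl⟩
  have hL : Tendsto L atTop (𝓝 (c H)) := by simpa [L, mul_div_cancel₀] using hS.const_mul 2
  have hlogL : Tendsto (fun N => log (L N)) atTop (𝓝 (log (c H))) :=
    ((continuousAt_log hcH.ne').tendsto).comp hL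
  have hkey : ∀ᶠ N : ℕ in atTop,
      0 < c (h N) ∧ log (c (h N)) - log (L N) = 2 * ((h N - H) * log N) := by
    filter_upwards [heq, hL.eventually_const_lt hcH, eventually_gt_atTop 0] with N hN hLN hN0
    have hN0' : (0 : ℝ) < N := Nat.cast_pos.2 hN0
    rw [eq_mul_rpow_of_mul_rpow_neg_eq (H := H) hN0' hN]
    refine ⟨mul_pos hLN (rpow_pos_of_pos hN0' _), ?_⟩
    rw [log_mul hLN.ne' (rpow_pos_of_pos hN0' _).ne', log_rpow hN0']
    ring
  have hlim : Tendsto h atTop (𝓝 H) := tendsto_of_isBoundedUnder_sub_mul_log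
    (isBoundedUnder_abs_sub_mul_log hc hpos hH hh hlogL hkey)
  have hclim : Tendsto (fun N => c (h N)) atTop (𝓝 (c H)) :=
    (hc H hH).tendsto.comp (tendsto_nhdsWithin_iff.2 ⟨hlim, Eventually.of_forall hh⟩)
  refine ⟨hlim, ?_⟩
  have hdiff := (((continuousAt_log hcH.ne').tendsto.comp hclim).sub hlogL).div_const (-2)
  rw [sub_self, zero_div] at hdiff
  refine hdiff.congr' (hkey.mono fun N hN => ?_)
  simp only [Function.comp_apply, hN.2]
  ring

theorem estimator_strong_consistency_general {Ω : Type*} [MeasurableSpace Ω]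
    (μ : Measure Ω)
    (H : ℝ) (hH : H ∈ Set.Ioo (1/2 : ℝ) 1)
    (ℓ p : ℕ) (hp : 2 ≤ p) (α : ℕ → ℝ)
    (hzero : ∀ r < p, ∑ q ∈ Finset.range (ℓ + 1), α q * (q : ℝ) ^ r = 0)
    (hne : ∑ q ∈ Finset.range (ℓ + 1), α q * (q : ℝ) ^ p ≠ 0)
    (c : ℝ → ℝ)
    (hc : ∀ x : ℝ, c x = -∑ q ∈ Finset.range (ℓ + 1), ∑ r ∈ Finset.range (ℓ + 1),
      α q * α r * |(q : ℝ) - (r : ℝ)| ^ (2 * x))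
    (S : ℕ → Ω → ℝ) (Hhat : ℕ → Ω → ℝ)
    (hSN : ∀ᵐ ω ∂μ, Tendsto (fun N : ℕ => (N : ℝ) ^ (2 * H) * S N ω) atTop (nhds (c H / 2)))
    (hHhat_mem : ∀ N ω, Hhat N ω ∈ Set.Icc (1/2 : ℝ) 1)
    (hHhat_eq : ∀ᵐ ω ∂μ, ∀ᶠ N : ℕ in atTop,
      c (Hhat N ω) * (N : ℝ) ^ (-(2 * Hhat N ω)) = 2 * S N ω) :
    (∀ᵐ ω ∂μ, Tendsto (fun N : ℕ => Hhat N ω) atTop (nhds H)) ∧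
    (∀ᵐ ω ∂μ, Tendsto (fun N : ℕ => (H - Hhat N ω) * Real.log N) atTop (nhds 0)) := by
  obtain ⟨hH0, hH1⟩ := hH
  have hsum : ∑ q ∈ range (ℓ + 1), α q = 0 := by simpa using hzero 0 (by omega)
  have hα : ∃ q ∈ range (ℓ + 1), α q ≠ 0 := by
    by_contra! h
    exact hne (sum_eq_zero fun q hq => by rw [h q hq, zero_mul])
  have hcont : ContinuousOn c (Icc (1/2) 1) :=
    ((continuousOn_sum_sum_mul_abs_sub_rpow _ _ α).neg.congr fun x _ => hc x).mono
      fun x hx => lt_of_lt_of_le one_half_pos hx.1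
  have hpos : ∀ y ∈ Icc (1/2) H, 0 < c y := fun y hy => hc y ▸
    neg_sum_sum_mul_abs_sub_rpow_pos _ Nat.cast_injective.injOn hsum hα
      (by linarith [hy.1]) (by linarith [hy.2])
  have hmain : ∀ᵐ ω ∂μ, Tendsto (fun N : ℕ => Hhat N ω) atTop (nhds H) ∧
      Tendsto (fun N : ℕ => (H - Hhat N ω) * Real.log N) atTop (nhds 0) := by
    filter_upwards [hSN, hHhat_eq] with ω hSω hHω
    exact tendsto_and_tendsto_sub_mul_log_of_mul_rpow_neg_eq hcont hpos ⟨hH0.le, hH1.le⟩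
      (fun N => hHhat_mem N ω) hSω hHω
  exact ⟨hmain.mono fun _ h => h.1, hmain.mono fun _ h => h.2⟩

/-- If `N^{2H} S_N → c(H)/2` a.s. and `Ĥ_N ∈ [1/2,1]` solves
`c(Ĥ_N) N^{-2Ĥ_N} = 2 S_N` for all large `N`, then `Ĥ_N → H` a.s. and
`(H - Ĥ_N) log N → 0` a.s. -/
theorem estimator_strong_consistency {Ω : Type*} [MeasurableSpace Ω]
    (μ : Measure Ω) [IsProbabilityMeasure μ]
    (H : ℝ) (hH : H ∈ Set.Ioo (1/2 : ℝ) 1)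
    (ℓ p : ℕ) (hp : 2 ≤ p) (α : ℕ → ℝ)
    (hzero : ∀ r < p, ∑ q ∈ Finset.range (ℓ + 1), α q * (q : ℝ) ^ r = 0)
    (hne : ∑ q ∈ Finset.range (ℓ + 1), α q * (q : ℝ) ^ p ≠ 0)
    (c : ℝ → ℝ)
    (hc : ∀ x : ℝ, c x = -∑ q ∈ Finset.range (ℓ + 1), ∑ r ∈ Finset.range (ℓ + 1),
      α q * α r * |(q : ℝ) - (r : ℝ)| ^ (2 * x))
    (S : ℕ → Ω → ℝ) (Hhat : ℕ → Ω → ℝ)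
    (hSN : ∀ᵐ ω ∂μ, Tendsto (fun N : ℕ => (N : ℝ) ^ (2 * H) * S N ω) atTop (nhds (c H / 2)))
    (hHhat_mem : ∀ N ω, Hhat N ω ∈ Set.Icc (1/2 : ℝ) 1)
    (hHhat_eq : ∀ᵐ ω ∂μ, ∀ᶠ N : ℕ in atTop,
      c (Hhat N ω) * (N : ℝ) ^ (-(2 * Hhat N ω)) = 2 * S N ω) :
    (∀ᵐ ω ∂μ, Tendsto (fun N : ℕ => Hhat N ω) atTop (nhds H)) ∧
    (∀ᵐ ω ∂μ, Tendsto (fun N : ℕ => (H - Hhat N ω) * Real.log N) atTop (nhds 0)) :=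
  estimator_strong_consistency_general μ H hH ℓ p hp α hzero hne c hc S Hhat hSN hHhat_mem hHhat_eq
end

section
/- Let p ≥ 2, H ∈ (0,1), ℓ ≥ 1, and let α = (α_0, ..., α_ℓ) be a filter of order p. Define f(x) = ∑_{q,r=0}^{ℓ} α_q α_r (1 + (q-r)x)^{2H} for |x| small enough that 1 + (q-r)x > 0 for all q,r. Then f is C^∞ in a neighborhood of 0 and its derivatives at 0 satisfy f^{(j)}(0) = 0 for all 0 ≤ j ≤ 2p - 1. -/
open Finset

lemma filter_moment_vanish (p ℓ : ℕ) (α : ℕ → ℝ)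
    (hzero : ∀ m < p, ∑ q ∈ Finset.range (ℓ + 1), α q * (q : ℝ) ^ m = 0)
    (j : ℕ) (hp : 1 ≤ p) (hj : j ≤ 2 * p - 1) :
    ∑ q ∈ range (ℓ + 1), ∑ r ∈ range (ℓ + 1),
      α q * α r * ((q : ℝ) - (r : ℝ)) ^ j = 0 := by
  have this1 : ∀ m ∈ range (j + 1), ((-1 : ℝ) ^ (j - m) * (j.choose m))
          * ((∑ q ∈ range (ℓ + 1), α q * (q : ℝ) ^ m)
            * (∑ r ∈ range (ℓ + 1), α r * (r : ℝ) ^ (j - m)))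
        = ∑ q ∈ range (ℓ + 1), ∑ r ∈ range (ℓ + 1),
            α q * α r * ((q:ℝ) ^ m * (-(r:ℝ)) ^ (j - m) * (j.choose m)) := by
    intro m _
    rw [Finset.sum_mul_sum, Finset.mul_sum]
    refine Finset.sum_congr rfl fun q _ => ?_
    rw [Finset.mul_sum]
    refine Finset.sum_congr rfl fun r _ => ?_
    rw [neg_pow]
    ring
  have step : (∑ m ∈ range (j + 1), ((-1 : ℝ) ^ (j - m) * (j.choose m))
          * ((∑ q ∈ range (ℓ + 1), α q * (q : ℝ) ^ m)
            * (∑ r ∈ range (ℓ + 1), α r * (r : ℝ) ^ (j - m))))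
      = ∑ q ∈ range (ℓ + 1), ∑ r ∈ range (ℓ + 1),
          α q * α r * ((q : ℝ) - (r : ℝ)) ^ j :=
    calc _ = ∑ m ∈ range (j + 1), ∑ q ∈ range (ℓ + 1), ∑ r ∈ range (ℓ + 1),
            α q * α r * ((q:ℝ) ^ m * (-(r:ℝ)) ^ (j - m) * (j.choose m)) :=
          Finset.sum_congr rfl this1
      _ = ∑ q ∈ range (ℓ + 1), ∑ m ∈ range (j + 1), ∑ r ∈ range (ℓ + 1),
            α q * α r * ((q:ℝ) ^ m * (-(r:ℝ)) ^ (j - m) * (j.choose m)) := Finset.sum_comm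
      _ = ∑ q ∈ range (ℓ + 1), ∑ r ∈ range (ℓ + 1), ∑ m ∈ range (j + 1),
            α q * α r * ((q:ℝ) ^ m * (-(r:ℝ)) ^ (j - m) * (j.choose m)) :=
          Finset.sum_congr rfl fun q _ => Finset.sum_comm
      _ = ∑ q ∈ range (ℓ + 1), ∑ r ∈ range (ℓ + 1),
            α q * α r * ((q : ℝ) - (r : ℝ)) ^ j := by
          refine Finset.sum_congr rfl fun q _ => Finset.sum_congr rfl fun r _ => ?_
          rw [← Finset.mul_sum, sub_eq_add_neg, add_pow]
  rw [← step]
  refine Finset.sum_eq_zero fun m hm => ?_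
  rcases lt_or_ge m p with h | h
  · rw [hzero m h]; ring
  · have : j - m < p := by omega
    rw [hzero _ this]; ring

/-- For a filter `α` of order `p ≥ 2` and `H ∈ (0,1)`, the function
`f(x) = ∑_{q,r} α_q α_r (1+(q-r)x)^{2H}` is `C^∞` on a neighborhood of `0` on which
all the bases `1+(q-r)x` are positive, and `f^{(j)}(0) = 0` for all `j ≤ 2p-1`. -/
theorem filter_taylor_vanishing (p : ℕ) (hp : 2 ≤ p) (H : ℝ) (hH : H ∈ Set.Ioo (0 : ℝ) 1)
    (ℓ : ℕ) (hℓ : 1 ≤ ℓ) (α : ℕ → ℝ)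
    (hzero : ∀ m < p, ∑ q ∈ Finset.range (ℓ + 1), α q * (q : ℝ) ^ m = 0)
    (hne : ∑ q ∈ Finset.range (ℓ + 1), α q * (q : ℝ) ^ p ≠ 0) :
    ∃ ε : ℝ, 0 < ε ∧
      (∀ x ∈ Metric.ball (0 : ℝ) ε, ∀ q ∈ Finset.range (ℓ + 1), ∀ r ∈ Finset.range (ℓ + 1),
        0 < 1 + ((q : ℝ) - (r : ℝ)) * x) ∧
      ContDiffOn ℝ (⊤ : ℕ∞) (fun x : ℝ => ∑ q ∈ Finset.range (ℓ + 1), ∑ r ∈ Finset.range (ℓ + 1),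
        α q * α r * (1 + ((q : ℝ) - (r : ℝ)) * x) ^ (2 * H)) (Metric.ball (0 : ℝ) ε) ∧
      ∀ j : ℕ, j ≤ 2 * p - 1 →
        iteratedDeriv j (fun x : ℝ => ∑ q ∈ Finset.range (ℓ + 1), ∑ r ∈ Finset.range (ℓ + 1),
          α q * α r * (1 + ((q : ℝ) - (r : ℝ)) * x) ^ (2 * H)) 0 = 0 := by
  set F : ℝ → ℝ := fun x : ℝ => ∑ q ∈ Finset.range (ℓ + 1), ∑ r ∈ Finset.range (ℓ + 1),
          α q * α r * (1 + ((q : ℝ) - (r : ℝ)) * x) ^ (2 * H) with hF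
  set ε : ℝ := 1 / (ℓ + 1) with hε
  have εpos : 0 < ε := by positivity
  -- positivity of bases
  have hpos : ∀ x ∈ Metric.ball (0 : ℝ) ε, ∀ q ∈ Finset.range (ℓ + 1),
      ∀ r ∈ Finset.range (ℓ + 1), 0 < 1 + ((q : ℝ) - (r : ℝ)) * x := by
    intro x hx q hq r hr
    simp only [Metric.mem_ball, dist_zero_right, Real.norm_eq_abs] at hx
    simp only [mem_range] at hq hr
    have hq' : (q : ℝ) ≤ ℓ := by exact_mod_cast Nat.lt_succ_iff.mp hq
    have hr' : (r : ℝ) ≤ ℓ := by exact_mod_cast Nat.lt_succ_iff.mp hr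
    have hc : |(q : ℝ) - r| ≤ ℓ := by
      rw [abs_sub_le_iff]
      constructor <;> [nlinarith [Nat.cast_nonneg (α := ℝ) r]; nlinarith [Nat.cast_nonneg (α := ℝ) q]]
    have h1 : |((q : ℝ) - r) * x| ≤ (ℓ : ℝ) * |x| := by
      rw [abs_mul]
      exact mul_le_mul_of_nonneg_right hc (abs_nonneg x)
    have h2 : (ℓ : ℝ) * |x| < (ℓ : ℝ) * ε + ε * 0 := by
      have : (0:ℝ) < (ℓ:ℝ) := by exact_mod_cast hℓ
      nlinarith
    have h3 : (ℓ : ℝ) * ε < 1 := by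
      rw [hε]
      rw [mul_one_div, div_lt_one (by positivity)]
      linarith
    have := neg_abs_le (((q : ℝ) - r) * x)
    nlinarith
  refine ⟨ε, εpos, hpos, ?_, ?_⟩
  · -- smoothness
    apply ContDiffOn.sum
    intro q hq
    apply ContDiffOn.sum
    intro r hr
    intro x hx
    exact (contDiffAt_const.mul (ContDiffAt.rpow_const_of_ne
      ((contDiff_const.add (contDiff_const.mul contDiff_id)).contDiffAt)
      (hpos x hx q hq r hr).ne')).contDiffWithinAt
  · -- derivatives
    set g : ℕ → ℝ → ℝ := fun j x =>
      (∏ i ∈ range j, (2 * H - i)) * ∑ q ∈ range (ℓ + 1), ∑ r ∈ range (ℓ + 1),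
        α q * α r * ((q : ℝ) - r) ^ j * (1 + ((q : ℝ) - r) * x) ^ (2 * H - j) with hg
    have hA : ∀ j : ℕ, ∀ x ∈ Metric.ball (0 : ℝ) ε, iteratedDeriv j F x = g j x := by
      intro j
      induction j with
      | zero =>
        intro x hx
        simp only [hg, iteratedDeriv_zero, hF, Finset.prod_range_zero, one_mul,
          Nat.cast_zero, pow_zero, sub_zero, mul_one]
      | succ j ih =>
        intro x hx
        rw [iteratedDeriv_succ]
        have hev : iteratedDeriv j F =ᶠ[nhds x] g j :=
          Filter.eventuallyEq_of_mem (Metric.isOpen_ball.mem_nhds hx) ih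
        rw [hev.deriv_eq]
        -- compute deriv (g j) x
        have hd : HasDerivAt (g j)
            ((∏ i ∈ range j, (2 * H - i)) * ∑ q ∈ range (ℓ + 1), ∑ r ∈ range (ℓ + 1),
              α q * α r * ((q : ℝ) - r) ^ j *
                (((q : ℝ) - r) * 1 * (2 * H - j) * (1 + ((q : ℝ) - r) * x) ^ (2 * H - j - 1))) x := by
          refine HasDerivAt.const_mul _ ?_
          refine HasDerivAt.fun_sum fun q hq => ?_
          refine HasDerivAt.fun_sum fun r hr => ?_
          refine HasDerivAt.const_mul _ ?_
          exact HasDerivAt.rpow_const (((hasDerivAt_id x).const_mul _).const_add 1)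
            (Or.inl (hpos x hx q hq r hr).ne')
        rw [hd.deriv]
        simp only [hg]
        rw [Finset.prod_range_succ, mul_assoc]
        congr 1
        rw [Finset.mul_sum]
        refine Finset.sum_congr rfl fun q _ => ?_
        rw [Finset.mul_sum]
        refine Finset.sum_congr rfl fun r _ => ?_
        have he : 2 * H - (j : ℝ) - 1 = 2 * H - ((j + 1 : ℕ) : ℝ) := by push_cast; ring
        rw [pow_succ, ← he]
        ring
    have h0 : (0 : ℝ) ∈ Metric.ball (0 : ℝ) ε := Metric.mem_ball_self εpos
    intro j hj
    rw [hA j 0 h0]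
    simp only [hg]
    have : ∑ q ∈ range (ℓ + 1), ∑ r ∈ range (ℓ + 1),
        α q * α r * ((q : ℝ) - r) ^ j * (1 + ((q : ℝ) - r) * 0) ^ (2 * H - j)
        = ∑ q ∈ range (ℓ + 1), ∑ r ∈ range (ℓ + 1), α q * α r * ((q : ℝ) - r) ^ j := by
      refine Finset.sum_congr rfl fun q _ => Finset.sum_congr rfl fun r _ => ?_
      rw [mul_zero, add_zero, Real.one_rpow, mul_one]
    rw [this, filter_moment_vanish p ℓ α hzero j (by omega) hj, mul_zero]
end

section
/- Let H ∈ (1/2,1), H' = (H+1)/2, and fix integers 0 ≤ q_1, r_1, q_2, r_2 ≤ ℓ. For nonnegative integers i, j ≥ ℓ with i ≠ j define A_N(i,j) = ∫_{[0,1]^4} |u-u'+i-j-q_1+q_2|^{2H'-2} |v-v'+i-j-r_1+r_2|^{2H'-2} du dv du' dv'. Then (1/(N-ℓ)^2) ∑_{i,j=ℓ, i≠j}^{N-1} A_N(i,j) · N^{2-2H} → 1/(H(2H-1)) as N → ∞. -/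
/-!
Writing `r = 2H' - 2 = H - 1`, the four-fold integral factors as `G(i - j - q₁ + q₂) G(i - j - r₁ + r₂)`
with `G(c) = boxAvg r c = ∫∫_{[0,1]²} |u - v + c|^r`, and since `|u - v + c|` stays within `1` of `|c|`,
`(|c| + 1)^r ≤ G(c) ≤ (|c| - 1)^r`. Grouping the pairs `i ≠ j` by the lag `k = |i - j|` turns the
double sum into `∑_k (M - k) w(k)` with `M = N - ℓ` and `w(k)` squeezed between `2 (k ± (ℓ + 1))^β`,
`β = 2r = 2H - 2 ∈ (-1, 0)`. Since `x ↦ (M - x)(x + c)^β` is antitone, `∑_k (M - k)(k + c)^β` is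
squeezed between two integrals, both `~ M^{β+2} / ((β + 1)(β + 2))`. Hence the normalised sum tends
to `2 / ((2H - 1) 2H) = 1 / (H (2H - 1))`.
-/

open Finset Filter intervalIntegral Real Set Topology

noncomputable def boxAvg (r c : ℝ) : ℝ := ∫ u in (0:ℝ)..1, ∫ v in (0:ℝ)..1, |u - v + c| ^ r

lemma fourfold_integral_abs_rpow_mul (r c d : ℝ) :
    (∫ u in (0:ℝ)..1, ∫ v in (0:ℝ)..1, ∫ u' in (0:ℝ)..1, ∫ v' in (0:ℝ)..1,
      |u - u' + c| ^ r * |v - v' + d| ^ r) = boxAvg r c * boxAvg r d := by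
  simp only [integral_const_mul, integral_mul_const, boxAvg]

lemma fourfold_integral_shifted_eq_boxAvg_mul (r y z a b a' b' : ℝ) :
    (∫ u in (0:ℝ)..1, ∫ v in (0:ℝ)..1, ∫ u' in (0:ℝ)..1, ∫ v' in (0:ℝ)..1,
      |u - u' + y - z - a + b| ^ r * |v - v' + y - z - a' + b'| ^ r)
      = boxAvg r (y - z + (b - a)) * boxAvg r (y - z + (b' - a')) := by
  rw [← fourfold_integral_abs_rpow_mul]
  simp only [show ∀ u u' a b : ℝ, u - u' + y - z - a + b = u - u' + (y - z + (b - a)) from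
    fun _ _ _ _ => by ring]

lemma integral_mem_Icc_of_continuous {f : ℝ → ℝ} (hf : Continuous f) {m M : ℝ}
    (hfm : ∀ x ∈ Icc (0:ℝ) 1, f x ∈ Icc m M) : ∫ x in (0:ℝ)..1, f x ∈ Icc m M := by
  have hfi : IntervalIntegrable f MeasureTheory.volume 0 1 := hf.intervalIntegrable 0 1
  constructor
  · simpa using integral_mono_on zero_le_one intervalIntegrable_const hfi fun x hx => (hfm x hx).1
  · simpa using integral_mono_on zero_le_one hfi intervalIntegrable_const fun x hx => (hfm x hx).2

lemma integral_integral_mem_Icc_of_continuous {F : ℝ → ℝ → ℝ}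
    (hF : Continuous (Function.uncurry F)) {m M : ℝ}
    (hFm : ∀ u ∈ Icc (0:ℝ) 1, ∀ v ∈ Icc (0:ℝ) 1, F u v ∈ Icc m M) :
    ∫ u in (0:ℝ)..1, ∫ v in (0:ℝ)..1, F u v ∈ Icc m M :=
  integral_mem_Icc_of_continuous (continuous_parametric_intervalIntegral_of_continuous' hF 0 1)
    fun u hu => integral_mem_Icc_of_continuous (hF.comp (Continuous.prodMk_right u)) (hFm u hu)

lemma abs_sub_add_mem_Icc {u v : ℝ} (hu : u ∈ Icc (0:ℝ) 1) (hv : v ∈ Icc (0:ℝ) 1) (c : ℝ) :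
    |u - v + c| ∈ Icc (|c| - 1) (|c| + 1) := by
  have huv : |u - v| ≤ 1 := abs_le.2 ⟨by linarith [hu.1, hv.2], by linarith [hu.2, hv.1]⟩
  have hc : |c| ≤ |u - v + c| + |u - v| := by
    simpa using abs_sub (u - v + c) (u - v)
  exact ⟨by linarith, by linarith [abs_add_le (u - v) c]⟩

lemma boxAvg_mem_Icc {r c : ℝ} (hr : r ≤ 0) (hc : 1 < |c|) :
    boxAvg r c ∈ Icc ((|c| + 1) ^ r) ((|c| - 1) ^ r) := by
  -- On the unit square `|u - v + c| ≥ |c| - 1 > 0`, so the cap below changes nothing there and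
  -- makes the integrand continuous on all of `ℝ²`.
  have hmax : boxAvg r c = ∫ u in (0:ℝ)..1, ∫ v in (0:ℝ)..1, max |u - v + c| (|c| - 1) ^ r := by
    refine integral_congr fun u hu => integral_congr fun v hv => ?_
    rw [Set.uIcc_of_le zero_le_one] at hu hv
    rw [max_eq_left (abs_sub_add_mem_Icc hu hv c).1]
  rw [hmax]
  refine integral_integral_mem_Icc_of_continuous ?_ fun u hu v hv => ?_
  · exact Continuous.rpow_const (by fun_prop) fun _ =>
      Or.inl (lt_of_lt_of_le (by linarith) (le_max_right _ _)).ne'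
  · obtain ⟨hlo, hhi⟩ := abs_sub_add_mem_Icc hu hv c
    rw [max_eq_left hlo]
    exact ⟨rpow_le_rpow_of_nonpos (by linarith) hhi hr, rpow_le_rpow_of_nonpos (by linarith) hlo hr⟩

lemma boxAvg_add_mem_Icc {r m x d : ℝ} (hr : r ≤ 0) (hd : |d| ≤ m) (hx : m + 1 < |x|) :
    boxAvg r (x + d) ∈ Icc ((|x| + (m + 1)) ^ r) ((|x| - (m + 1)) ^ r) := by
  have hlo : |x| - m ≤ |x + d| := by
    have := abs_sub_abs_le_abs_sub x (-d)
    rw [abs_neg, sub_neg_eq_add] at this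
    linarith
  have hhi : |x + d| ≤ |x| + m := by linarith [abs_add_le x d]
  obtain ⟨h₁, h₂⟩ := boxAvg_mem_Icc hr (show 1 < |x + d| by linarith)
  exact ⟨(rpow_le_rpow_of_nonpos (by linarith) (by linarith) hr).trans h₁,
    h₂.trans (rpow_le_rpow_of_nonpos (by linarith) (by linarith) hr)⟩

lemma boxAvg_mul_boxAvg_mem_Icc {r m x d₁ d₂ : ℝ} (hr : r ≤ 0) (hd₁ : |d₁| ≤ m) (hd₂ : |d₂| ≤ m)
    (hx : m + 1 < |x|) :
    boxAvg r (x + d₁) * boxAvg r (x + d₂) ∈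
      Icc ((|x| + (m + 1)) ^ (2 * r)) ((|x| - (m + 1)) ^ (2 * r)) := by
  obtain ⟨h₁, h₁'⟩ := boxAvg_add_mem_Icc hr hd₁ hx
  obtain ⟨h₂, h₂'⟩ := boxAvg_add_mem_Icc hr hd₂ hx
  have hm : 0 ≤ m := (abs_nonneg d₁).trans hd₁
  rw [two_mul, rpow_add (by linarith), rpow_add (by linarith)]
  exact ⟨mul_le_mul h₁ h₂ (rpow_nonneg (by linarith) _) ((rpow_nonneg (by linarith) _).trans h₁),
    mul_le_mul h₁' h₂' ((rpow_nonneg (by linarith) _).trans h₂) (rpow_nonneg (by linarith) _)⟩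

lemma boxAvg_lag_weight_mem_Icc {r m d₁ d₂ k : ℝ} (hr : r ≤ 0) (hd₁ : |d₁| ≤ m) (hd₂ : |d₂| ≤ m)
    (hk : m + 1 < k) :
    boxAvg r (k + d₁) * boxAvg r (k + d₂) + boxAvg r (-k + d₁) * boxAvg r (-k + d₂) ∈
      Icc (2 * (k + (m + 1)) ^ (2 * r)) (2 * (k + -(m + 1)) ^ (2 * r)) := by
  have hk₀ : |k| = k := abs_of_pos (by linarith [(abs_nonneg d₁).trans hd₁])
  have hpos := boxAvg_mul_boxAvg_mem_Icc hr hd₁ hd₂ (x := k) (by rwa [hk₀])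
  have hneg := boxAvg_mul_boxAvg_mem_Icc hr hd₁ hd₂ (x := -k) (by rwa [abs_neg, hk₀])
  rw [hk₀] at hpos
  rw [abs_neg, hk₀] at hneg
  rw [← sub_eq_add_neg]
  exact ⟨by linarith [hpos.1, hneg.1], by linarith [hpos.2, hneg.2]⟩

lemma abs_natCast_sub_natCast_le {a b ℓ : ℕ} (ha : a ≤ ℓ) (hb : b ≤ ℓ) : |(b : ℝ) - a| ≤ ℓ := by
  rw [abs_sub_le_iff]
  constructor <;> linarith [(Nat.cast_le (α := ℝ)).2 ha, (Nat.cast_le (α := ℝ)).2 hb,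
    (a.cast_nonneg : (0 : ℝ) ≤ a), (b.cast_nonneg : (0 : ℝ) ≤ b)]

lemma sum_range_sum_range_sub (g : ℝ → ℝ) (M : ℕ) :
    ∑ i ∈ range M, ∑ j ∈ range i, g ((i : ℝ) - j) = ∑ k ∈ Ico 1 M, ((M : ℝ) - k) * g k := by
  induction M with
  | zero => simp
  | succ M ih =>
    have hrow : ∑ j ∈ range M, g ((M : ℝ) - j) = ∑ k ∈ Ico 1 (M + 1), g k := by
      rw [sum_Ico_eq_sum_range, Nat.add_sub_cancel, ← sum_range_reflect]
      refine sum_congr rfl fun j hj => ?_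
      have := mem_range.1 hj
      congr 1
      push_cast [Nat.cast_sub (by omega : j ≤ M - 1), Nat.cast_sub (by omega : 1 ≤ M)]
      ring
    have hlast : ∑ k ∈ Ico 1 M, ((M : ℝ) - k) * g k = ∑ k ∈ Ico 1 (M + 1), ((M : ℝ) - k) * g k :=
      sum_subset (Ico_subset_Ico_right M.le_succ) fun k hk hk' => by
        rw [show k = M by simp only [Finset.mem_Ico] at hk hk'; omega, sub_self, zero_mul]
    rw [sum_range_succ, ih, hrow, hlast, ← sum_add_distrib]
    refine sum_congr rfl fun k _ => ?_
    push_cast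
    ring

lemma sum_range_sum_range_ite_ne (F : ℝ → ℝ) (M : ℕ) :
    ∑ i ∈ range M, ∑ j ∈ range M, (if i ≠ j then F ((i : ℝ) - j) else 0)
      = ∑ k ∈ Ico 1 M, ((M : ℝ) - k) * (F k + F (-k)) := by
  have hsplit : ∀ i j : ℕ, (if i ≠ j then F ((i : ℝ) - j) else 0)
      = (if j < i then F ((i : ℝ) - j) else 0) + (if i < j then F (-((j : ℝ) - i)) else 0) := by
    intro i j
    rcases lt_trichotomy i j with h | h | h
    · simp [h, h.ne, h.not_gt]
    · simp [h]
    · simp [h, h.ne', h.not_gt]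
  have hlower : ∀ G : ℕ → ℕ → ℝ, ∑ i ∈ range M, ∑ j ∈ range M, (if j < i then G i j else 0)
      = ∑ i ∈ range M, ∑ j ∈ range i, G i j := fun G =>
    sum_congr rfl fun i hi => by
      rw [← sum_filter]
      congr 1
      ext j
      simp only [mem_filter, Finset.mem_range] at hi ⊢
      omega
  simp_rw [hsplit, sum_add_distrib]
  rw [hlower, sum_comm (s := range M) (t := range M) (f := fun i j => if i < j then _ else _), hlower]
  simp only [← sum_add_distrib]
  exact sum_range_sum_range_sub (fun x => F x + F (-x)) M

lemma sum_Ico_sum_Ico_ite_ne (F : ℝ → ℝ) (ℓ M : ℕ) :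
    ∑ i ∈ Ico ℓ (M + ℓ), ∑ j ∈ Ico ℓ (M + ℓ), (if i ≠ j then F ((i : ℝ) - j) else 0)
      = ∑ k ∈ Ico 1 M, ((M : ℝ) - k) * (F k + F (-k)) := by
  rw [← sum_range_sum_range_ite_ne, sum_Ico_eq_sum_range, Nat.add_sub_cancel]
  refine sum_congr rfl fun i _ => ?_
  rw [sum_Ico_eq_sum_range, Nat.add_sub_cancel]
  refine sum_congr rfl fun j _ => ?_
  simp only [ne_eq, add_right_inj, Nat.cast_add, add_sub_add_left_eq_sub]

lemma rpow_add_two_eq_rpow_add_one_mul {x : ℝ} (hx : 0 ≤ x) {β : ℝ} (hβ : β + 2 ≠ 0) :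
    x ^ (β + 2) = x ^ (β + 1) * x := by
  rw [← rpow_add_one' hx (by rwa [add_assoc, one_add_one_eq_two])]
  ring_nf

lemma integral_sub_mul_rpow {β y L : ℝ} (hβ : -1 < β) (hy : 0 ≤ y) (hL : 0 ≤ L) :
    ∫ x in y..L, (L - x) * x ^ β
      = L ^ (β + 2) / ((β + 1) * (β + 2)) - L * y ^ (β + 1) / (β + 1) + y ^ (β + 2) / (β + 2) := by
  have hβ₁ : β + 1 ≠ 0 := by linarith
  have hβ₂ : β + 2 ≠ 0 := by linarith
  have hsplit : ∀ x ∈ uIcc y L, (L - x) * x ^ β = L * x ^ β - x ^ (β + 1) := fun x hx => by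
    rw [rpow_add_one' (le_min hy hL |>.trans hx.1) hβ₁]; ring
  rw [integral_congr hsplit, integral_sub ((intervalIntegrable_rpow' hβ).const_mul L)
      (intervalIntegrable_rpow' (by linarith)), integral_const_mul, integral_rpow (Or.inl hβ),
    integral_rpow (Or.inl (by linarith)), show β + 1 + 1 = β + 2 by ring,
    rpow_add_two_eq_rpow_add_one_mul hL hβ₂]
  field_simp
  ring

lemma tendsto_integral_sub_mul_rpow_div {β y : ℝ} (hβ : -1 < β) (hy : 0 ≤ y) :
    Tendsto (fun L => (∫ x in y..L, (L - x) * x ^ β) / L ^ (β + 2)) atTop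
      (𝓝 (1 / ((β + 1) * (β + 2)))) := by
  have hlim : Tendsto (fun L : ℝ => 1 / ((β + 1) * (β + 2))
      - y ^ (β + 1) / (β + 1) * L ^ (-(β + 1)) + y ^ (β + 2) / (β + 2) * L ^ (-(β + 2))) atTop
      (𝓝 (1 / ((β + 1) * (β + 2)) - y ^ (β + 1) / (β + 1) * 0 + y ^ (β + 2) / (β + 2) * 0)) :=
    (tendsto_const_nhds.sub ((tendsto_rpow_neg_atTop (by linarith)).const_mul _)).add
      ((tendsto_rpow_neg_atTop (by linarith)).const_mul _)
  rw [mul_zero, mul_zero, sub_zero, add_zero] at hlim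
  refine hlim.congr' ?_
  filter_upwards [eventually_gt_atTop (max y 0)] with L hL
  have hL₀ : 0 < L := (le_max_right y 0).trans_lt hL
  have : L ^ (β + 1) ≠ 0 := (rpow_pos_of_pos hL₀ _).ne'
  rw [integral_sub_mul_rpow hβ hy hL₀.le, rpow_neg hL₀.le, rpow_neg hL₀.le,
    rpow_add_two_eq_rpow_add_one_mul hL₀.le (by linarith)]
  field_simp

lemma Filter.Tendsto.div_rpow_comp_add_const {f : ℝ → ℝ} {p a : ℝ}
    (hf : Tendsto (fun L => f L / L ^ p) atTop (𝓝 a)) (c : ℝ) :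
    Tendsto (fun L => f (L + c) / L ^ p) atTop (𝓝 a) := by
  have hratio : Tendsto (fun L : ℝ => 1 + c * L⁻¹) atTop (𝓝 1) := by
    simpa using tendsto_const_nhds.add (tendsto_inv_atTop_zero.const_mul c)
  have hlim := (hf.comp (tendsto_atTop_add_const_right _ c tendsto_id)).mul
    (hratio.rpow_const (p := p) (Or.inl one_ne_zero))
  rw [one_rpow, mul_one] at hlim
  refine hlim.congr' ?_
  filter_upwards [eventually_gt_atTop (max 0 (-c))] with L hL
  have hL₀ : 0 < L := (le_max_left _ _).trans_lt hL
  have hLc : 0 < L + c := by linarith [le_max_right 0 (-c)]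
  have : 1 + c * L⁻¹ = (L + c) / L := by field_simp
  simp only [Function.comp_apply, id, this, div_rpow hLc.le hL₀.le]
  have : (L + c) ^ p ≠ 0 := (rpow_pos_of_pos hLc _).ne'
  field_simp

lemma antitoneOn_sub_mul_rpow {β y L : ℝ} (hβ : β ≤ 0) (hy : 0 < y) :
    AntitoneOn (fun x => (L - x) * x ^ β) (Icc y L) := by
  intro x hx x' hx' hxx'
  exact mul_le_mul (by linarith) (rpow_le_rpow_of_nonpos (hy.trans_le hx.1) hxx' hβ)
    (rpow_nonneg (hy.trans_le hx'.1).le _) (by linarith [hx.2])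

lemma sum_Ico_sub_mul_add_rpow_mem_Icc {β c : ℝ} (hβ : β ≤ 0) {K M : ℕ} (hKM : K ≤ M)
    (hK : 1 < K + c) :
    ∑ k ∈ Ico K M, ((M : ℝ) - k) * (k + c) ^ β ∈
      Icc (∫ x in (K + c)..(M + c), (M + c - x) * x ^ β)
        (∫ x in (K + c - 1)..(M + c), (M + c - x) * x ^ β) := by
  set g : ℝ → ℝ := fun x => (M + c - x) * x ^ β
  have hg : AntitoneOn g (Icc (K + c - 1) (M + c)) :=
    antitoneOn_sub_mul_rpow hβ (by linarith)
  have hsum : ∑ k ∈ Ico K M, ((M : ℝ) - k) * (k + c) ^ β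
      = ∑ i ∈ range (M - K), g (K + c + i) := by
    rw [sum_Ico_eq_sum_range]
    refine sum_congr rfl fun i _ => ?_
    simp only [g]
    push_cast
    ring_nf
  have hend : (K + c : ℝ) + ((M - K : ℕ) : ℝ) = M + c := by
    rw [Nat.cast_sub hKM]; ring
  constructor
  · have := (hg.mono (Icc_subset_Icc (by linarith) hend.le)).integral_le_sum
    rwa [hend, ← hsum] at this
  · have hend' : (K + c - 1 : ℝ) + ((M - K + 1 : ℕ) : ℝ) = M + c := by
      rw [← hend]; push_cast; ring
    have hg' : AntitoneOn g (Icc (K + c - 1) (K + c - 1 + ((M - K + 1 : ℕ) : ℝ))) := by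
      rwa [hend']
    have := hg'.sum_le_integral
    -- the last term of this Riemann sum is `g (M + c) = 0`
    rw [hend', sum_range_succ] at this
    refine le_trans (le_of_eq ?_) this
    rw [hsum, hend']
    simp only [g, sub_self, zero_mul, add_zero]
    refine sum_congr rfl fun i _ => ?_
    push_cast
    ring_nf

lemma tendsto_sum_Ico_sub_mul_add_rpow_div {β c : ℝ} (hβ₁ : -1 < β) (hβ₀ : β ≤ 0) {K : ℕ}
    (hK : 1 < K + c) :
    Tendsto (fun M : ℕ => (∑ k ∈ Ico K M, ((M : ℝ) - k) * (k + c) ^ β) / (M : ℝ) ^ (β + 2))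
      atTop (𝓝 (1 / ((β + 1) * (β + 2)))) := by
  have hlim : ∀ y : ℝ, 0 ≤ y → Tendsto (fun M : ℕ =>
      (∫ x in y..(M + c), (M + c - x) * x ^ β) / (M : ℝ) ^ (β + 2)) atTop
      (𝓝 (1 / ((β + 1) * (β + 2)))) := fun y hy =>
    ((tendsto_integral_sub_mul_rpow_div hβ₁ hy).div_rpow_comp_add_const c).comp
      tendsto_natCast_atTop_atTop
  refine tendsto_of_tendsto_of_tendsto_of_le_of_le' (hlim (K + c) (by linarith))
    (hlim (K + c - 1) (by linarith)) ?_ ?_ <;>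
  filter_upwards [eventually_ge_atTop K] with M hM <;>
  gcongr
  exacts [(sum_Ico_sub_mul_add_rpow_mem_Icc hβ₀ hM hK).1, (sum_Ico_sub_mul_add_rpow_mem_Icc hβ₀ hM hK).2]

lemma tendsto_sub_const_div_rpow_atTop {p : ℝ} (hp : 1 < p) (a : ℝ) :
    Tendsto (fun x : ℝ => (x - a) / x ^ p) atTop (𝓝 0) := by
  have hlim := (tendsto_rpow_neg_atTop (by linarith : 0 < p - 1)).sub
    ((tendsto_rpow_neg_atTop (by linarith : 0 < p)).const_mul a)
  rw [mul_zero, sub_zero] at hlim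
  refine hlim.congr' ?_
  filter_upwards [eventually_gt_atTop 0] with x hx
  rw [rpow_neg hx.le, rpow_neg hx.le, rpow_sub_one hx.ne', sub_div]
  field_simp

lemma tendsto_sum_sub_mul_div_rpow_atTop (t : Finset ℕ) (w : ℕ → ℝ) {p : ℝ} (hp : 1 < p) :
    Tendsto (fun M : ℕ => (∑ k ∈ t, ((M : ℝ) - k) * w k) / (M : ℝ) ^ p) atTop (𝓝 0) := by
  simp_rw [sum_div]
  rw [← sum_const_zero (s := t)]
  refine tendsto_finsetSum t fun k _ => ?_
  simpa [mul_div_right_comm] using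
    ((tendsto_sub_const_div_rpow_atTop hp k).comp tendsto_natCast_atTop_atTop).mul_const (w k)

theorem tendsto_sum_Ico_sub_mul_div_rpow_of_bounds {β a c₁ c₂ : ℝ} (hβ₁ : -1 < β) (hβ₀ : β ≤ 0)
    {w : ℕ → ℝ} {s K : ℕ} (hsK : s ≤ K) (hK₁ : 1 < K + c₁) (hK₂ : 1 < K + c₂)
    (hlo : ∀ k ≥ K, a * (k + c₁) ^ β ≤ w k) (hhi : ∀ k ≥ K, w k ≤ a * (k + c₂) ^ β) :
    Tendsto (fun M : ℕ => (∑ k ∈ Ico s M, ((M : ℝ) - k) * w k) / (M : ℝ) ^ (β + 2)) atTop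
      (𝓝 (a / ((β + 1) * (β + 2)))) := by
  have hhead := tendsto_sum_sub_mul_div_rpow_atTop (Ico s K) w (p := β + 2) (by linarith)
  have hbound : ∀ c : ℝ, 1 < K + c → Tendsto (fun M : ℕ =>
      (∑ k ∈ Ico s K, ((M : ℝ) - k) * w k) / (M : ℝ) ^ (β + 2)
        + a * (∑ k ∈ Ico K M, ((M : ℝ) - k) * (k + c) ^ β) / (M : ℝ) ^ (β + 2))
      atTop (𝓝 (a / ((β + 1) * (β + 2)))) := fun c hc => by
    have := hhead.add ((tendsto_sum_Ico_sub_mul_add_rpow_div hβ₁ hβ₀ hc).const_mul a)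
    simpa only [zero_add, mul_one_div, mul_div_assoc] using this
  have htail : ∀ M ≥ K, ∑ k ∈ Ico K M, ((M : ℝ) - k) * w k ∈
      Icc (a * ∑ k ∈ Ico K M, ((M : ℝ) - k) * (k + c₁) ^ β)
        (a * ∑ k ∈ Ico K M, ((M : ℝ) - k) * (k + c₂) ^ β) := fun M _ => by
    rw [mul_sum, mul_sum]
    constructor <;> refine sum_le_sum fun k hk => ?_ <;> rw [mul_left_comm] <;>
      have hMk : (0 : ℝ) ≤ M - k := sub_nonneg.2 (mod_cast (mem_Ico.1 hk).2.le)
    · exact mul_le_mul_of_nonneg_left (hlo k (mem_Ico.1 hk).1) hMk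
    · exact mul_le_mul_of_nonneg_left (hhi k (mem_Ico.1 hk).1) hMk
  refine tendsto_of_tendsto_of_tendsto_of_le_of_le' (hbound c₁ hK₁) (hbound c₂ hK₂) ?_ ?_ <;>
  filter_upwards [eventually_ge_atTop K] with M hM <;>
  rw [← sum_Ico_consecutive _ hsK hM, add_div] <;>
  gcongr
  exacts [(htail M hM).1, (htail M hM).2]

lemma div_rpow_add_two_mul_div_rpow {M L β : ℝ} (hM : 0 < M) (hL : 0 < L) (S : ℝ) :
    S / M ^ (β + 2) * (M / L) ^ β = L ^ (-β) / M ^ 2 * S := by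
  rw [rpow_neg hL.le, div_rpow hM.le hL.le, rpow_add hM, rpow_two]
  have : L ^ β ≠ 0 := (rpow_pos_of_pos hL _).ne'
  have : M ^ β ≠ 0 := (rpow_pos_of_pos hM _).ne'
  field_simp

/-- With `H ∈ (1/2,1)`, `H' = (H+1)/2` and offsets `q₁,r₁,q₂,r₂ ≤ ℓ`,
the normalized off-diagonal double sum of the four-fold integrals
`A_N(i,j) = ∫_{[0,1]^4} |u-u'+i-j-q₁+q₂|^{2H'-2} |v-v'+i-j-r₁+r₂|^{2H'-2}`
satisfies `N^{2-2H} (N-ℓ)^{-2} ∑_{i≠j} A_N(i,j) → 1/(H(2H-1))`. -/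
theorem offdiagonal_riemann_limit (H : ℝ) (hH : H ∈ Set.Ioo (1/2 : ℝ) 1)
    (H' : ℝ) (hH' : H' = (H + 1) / 2)
    (ℓ : ℕ) (q₁ r₁ q₂ r₂ : ℕ)
    (hq₁ : q₁ ≤ ℓ) (hr₁ : r₁ ≤ ℓ) (hq₂ : q₂ ≤ ℓ) (hr₂ : r₂ ≤ ℓ) :
    Tendsto (fun N : ℕ =>
      ((N : ℝ) ^ (2 - 2 * H) / ((N : ℝ) - (ℓ : ℝ)) ^ 2) *
        ∑ i ∈ Finset.Ico ℓ N, ∑ j ∈ Finset.Ico ℓ N,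
          if i ≠ j then
            ∫ u in (0:ℝ)..1, ∫ v in (0:ℝ)..1, ∫ u' in (0:ℝ)..1, ∫ v' in (0:ℝ)..1,
              |u - u' + (i : ℝ) - (j : ℝ) - (q₁ : ℝ) + (q₂ : ℝ)| ^ (2 * H' - 2) *
              |v - v' + (i : ℝ) - (j : ℝ) - (r₁ : ℝ) + (r₂ : ℝ)| ^ (2 * H' - 2)
          else 0)
      atTop (nhds (1 / (H * (2 * H - 1)))) := by
  obtain ⟨hH₁, hH₂⟩ := hH
  set r := 2 * H' - 2
  have hr : r ≤ 0 := by simp only [r, hH']; linarith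
  have hβ : 2 * r = 2 * H - 2 := by simp only [r, hH']; ring
  set F : ℝ → ℝ := fun x => boxAvg r (x + (q₂ - q₁)) * boxAvg r (x + (r₂ - r₁))
  have hw : ∀ k ≥ ℓ + 3, F k + F (-k) ∈
      Icc (2 * (k + (ℓ + 1 : ℝ)) ^ (2 * r)) (2 * (k + -(ℓ + 1 : ℝ)) ^ (2 * r)) := fun k hk =>
    boxAvg_lag_weight_mem_Icc hr (abs_natCast_sub_natCast_le hq₁ hq₂)
      (abs_natCast_sub_natCast_le hr₁ hr₂) (by exact_mod_cast (by omega : ℓ + 1 < k))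
  have hS := tendsto_sum_Ico_sub_mul_div_rpow_of_bounds (β := 2 * r) (s := 1) (by linarith)
    (by linarith) (by omega) (by push_cast; linarith) (by push_cast; linarith)
    (fun k hk => (hw k hk).1) (fun k hk => (hw k hk).2)
  have hratio : Tendsto (fun M : ℕ => ((M : ℝ) / (M + ℓ)) ^ (2 * r)) atTop (𝓝 1) := by
    simpa using (tendsto_natCast_div_add_atTop (ℓ : ℝ)).rpow_const (Or.inl one_ne_zero)
  have hlim : 2 / ((2 * r + 1) * (2 * r + 2)) * 1 = 1 / (H * (2 * H - 1)) := by
    have : 2 * H - 1 ≠ 0 := by linarith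
    rw [hβ, show 2 * H - 2 + 1 = 2 * H - 1 by ring, show 2 * H - 2 + 2 = 2 * H by ring]
    field_simp
  -- Reindexing by `N = M + ℓ` makes `N - ℓ = M` the number of summation indices.
  rw [← tendsto_add_atTop_iff_nat ℓ, ← hlim]
  refine (hS.mul hratio).congr' ?_
  filter_upwards [eventually_gt_atTop 0] with M hM
  rw [← sum_Ico_sum_Ico_ite_ne]
  simp only [fourfold_integral_shifted_eq_boxAvg_mul]
  push_cast
  rw [add_sub_cancel_right, show 2 - 2 * H = -(2 * r) by linarith]
  exact div_rpow_add_two_mul_div_rpow (by exact_mod_cast hM) (by positivity) _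
end
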